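/- arXiv:1507.05318 — 9 statements merged into one kernel-verified Lean document; each statement's English description precedes it below -/
import Mathlib

section
/- Let θ1 > 0, α ∈ ℝ, and L1, L2 ∈ ℝ. Suppose y1, y2 : (0,θ1] → ℝ are twice differentiable, satisfy y_j''(θ) + coth(θ)·y_j'(θ) + (L_j − α²/sinh²(θ))·y_j(θ) = 0 on (0,θ1) for j = 1, 2, are strictly positive on (0,θ1), satisfy y1(θ1) = y2(θ1) = 0, and that lim_{θ→0⁺} sinh(θ)·(y1'(θ)·y2(θ) − y1(θ)·y2'(θ)) exists and is a positive real number. Then L2 < L1. -/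
open Real Set Filter

noncomputable section

/-- The hyperbolic cotangent. -/
def Real.coth (x : ℝ) : ℝ := Real.cosh x / Real.sinh x

/-- The Sturm-type comparison underlying Lemma 2.3: if `y1`, `y2` are positive
solutions of the Legendre-type equations with parameters `L1` and `L2` on
`(0,θ1)`, both vanishing at `θ1`, and `sinh θ` times their Wronskian tends to a
positive limit as `θ → 0⁺`, then `L2 < L1`. -/
theorem legendre_sturm_comparison (θ1 α L1 L2 : ℝ) (hθ1 : 0 < θ1)
    (y1 y1' y1'' y2 y2' y2'' : ℝ → ℝ)
    (hy1 : ∀ θ ∈ Ioc (0:ℝ) θ1, HasDerivAt y1 (y1' θ) θ)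
    (hy1' : ∀ θ ∈ Ioc (0:ℝ) θ1, HasDerivAt y1' (y1'' θ) θ)
    (hy2 : ∀ θ ∈ Ioc (0:ℝ) θ1, HasDerivAt y2 (y2' θ) θ)
    (hy2' : ∀ θ ∈ Ioc (0:ℝ) θ1, HasDerivAt y2' (y2'' θ) θ)
    (hode1 : ∀ θ ∈ Ioo (0:ℝ) θ1,
      y1'' θ + Real.coth θ * y1' θ + (L1 - α ^ 2 / Real.sinh θ ^ 2) * y1 θ = 0)
    (hode2 : ∀ θ ∈ Ioo (0:ℝ) θ1,
      y2'' θ + Real.coth θ * y2' θ + (L2 - α ^ 2 / Real.sinh θ ^ 2) * y2 θ = 0)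
    (hpos1 : ∀ θ ∈ Ioo (0:ℝ) θ1, 0 < y1 θ)
    (hpos2 : ∀ θ ∈ Ioo (0:ℝ) θ1, 0 < y2 θ)
    (hz1 : y1 θ1 = 0) (hz2 : y2 θ1 = 0)
    (c : ℝ) (hc : 0 < c)
    (hW : Tendsto (fun θ : ℝ => Real.sinh θ * (y1' θ * y2 θ - y1 θ * y2' θ))
      (nhdsWithin 0 (Ioi 0)) (nhds c)) :
    L2 < L1 := by
  by_contra hcon
  push_neg at hcon
  set W : ℝ → ℝ := fun θ => Real.sinh θ * (y1' θ * y2 θ - y1 θ * y2' θ) with hWdef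
  have hWd : ∀ θ ∈ Ioo (0:ℝ) θ1,
      HasDerivAt W ((L2 - L1) * (Real.sinh θ * (y1 θ * y2 θ))) θ := by
    intro θ hθ
    have hθ' : θ ∈ Ioc (0:ℝ) θ1 := ⟨hθ.1, hθ.2.le⟩
    have hs : Real.sinh θ ≠ 0 := (Real.sinh_pos_iff.2 hθ.1).ne'
    have hd : HasDerivAt W (Real.cosh θ * (y1' θ * y2 θ - y1 θ * y2' θ) +
        Real.sinh θ * ((y1'' θ * y2 θ + y1' θ * y2' θ) -
          (y1' θ * y2' θ + y1 θ * y2'' θ))) θ := by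
      exact (Real.hasDerivAt_sinh θ).mul
        (((hy1' θ hθ').mul (hy2 θ hθ')).sub ((hy1 θ hθ').mul (hy2' θ hθ')))
    convert hd using 1
    have h1 := hode1 θ hθ
    have h2 := hode2 θ hθ
    have e1 : y1'' θ = -(Real.cosh θ / Real.sinh θ) * y1' θ -
        (L1 - α ^ 2 / Real.sinh θ ^ 2) * y1 θ := by
      rw [Real.coth] at h1; linarith
    have e2 : y2'' θ = -(Real.cosh θ / Real.sinh θ) * y2' θ -
        (L2 - α ^ 2 / Real.sinh θ ^ 2) * y2 θ := by
      rw [Real.coth] at h2; linarith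
    rw [e1, e2]
    field_simp
    ring
  have hcont : ContinuousOn W (Ioc 0 θ1) := by
    intro θ hθ
    exact (Real.continuous_sinh.continuousAt.mul
      (((hy1' θ hθ).continuousAt.mul (hy2 θ hθ).continuousAt).sub
        ((hy1 θ hθ).continuousAt.mul (hy2' θ hθ).continuousAt))).continuousWithinAt
  have hmono : MonotoneOn W (Ioc 0 θ1) := by
    apply monotoneOn_of_deriv_nonneg (convex_Ioc 0 θ1) hcont
    · intro θ hθ
      rw [interior_Ioc] at hθ
      exact (hWd θ hθ).differentiableAt.differentiableWithinAt
    · intro θ hθ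
      rw [interior_Ioc] at hθ
      rw [(hWd θ hθ).deriv]
      have hs := Real.sinh_pos_iff.2 hθ.1
      have h1 := hpos1 θ hθ
      have h2 := hpos2 θ hθ
      have h0 : 0 ≤ L2 - L1 := by linarith
      exact mul_nonneg h0 (by positivity)
  have hW1 : W θ1 = 0 := by simp [hWdef, hz1, hz2]
  have hle : ∀ θ ∈ Ioo (0:ℝ) θ1, W θ ≤ 0 := by
    intro θ hθ
    have := hmono ⟨hθ.1, hθ.2.le⟩ ⟨hθ1, le_refl θ1⟩ hθ.2.le
    linarith [hW1]
  have hmem : Ioo (0:ℝ) θ1 ∈ nhdsWithin (0:ℝ) (Ioi 0) :=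
    Ioo_mem_nhdsGT_of_mem ⟨le_refl 0, hθ1⟩
  have : c ≤ 0 :=
    le_of_tendsto hW (eventually_of_mem hmem hle)
  linarith

end
end

section
/- Let n be a real parameter with 2 < n < 4, let 0 < R < 1, and let ρ(r) = 2/(1−r²). Let v : [0,R] → ℝ be continuously differentiable with v(R) = 0, and set u(r) = ρ(r)^{(2−n)/2}·v(r). Then ∫_0^R u'(r)²·ρ(r)^{n−2}·r^{n−1} dr = (n(n−2)/4)·∫_0^R ρ(r)²·v(r)²·r^{n+1} dr + (n(n−2)/2)·∫_0^R v(r)²·ρ(r)·r^{n−1} dr + ∫_0^R v'(r)²·r^{n−1} dr. -/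
/-!
Put `c = (2 - n) / 2`. As `ρ' = r ρ²`, `u' = ρ^c (v' + c r ρ v)`, and since
`ρ^{2c} ρ^{n-2} = 1` the left integrand is `(v' + c r ρ v)² r^{n-1}`. Its cross term
`2c ρ r^n v v'` is removed by integrating
`(ρ r^n v²)' = ρ² v² r^{n+1} + n ρ v² r^{n-1} + 2 ρ r^n v v'` over `[0, R]`: the boundary
terms vanish because `v(R) = 0` and `0^n = 0`, and collecting coefficients gives
`c² - c = n(n-2)/4` and `-nc = n(n-2)/2`.
-/

open Real Set Filter MeasureTheory intervalIntegral

noncomputable def conformalFactor (r : ℝ) : ℝ := 2 / (1 - r ^ 2)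

lemma sq_lt_one_of_mem_Icc {R r : ℝ} (hR : R < 1) (hr : r ∈ Icc 0 R) : r ^ 2 < 1 := by
  nlinarith [hr.1, hr.2]

lemma conformalFactor_pos {r : ℝ} (hr : r ^ 2 < 1) : 0 < conformalFactor r :=
  div_pos two_pos (sub_pos.2 hr)

lemma hasDerivAt_conformalFactor {r : ℝ} (hr : r ^ 2 ≠ 1) :
    HasDerivAt conformalFactor (r * conformalFactor r ^ 2) r := by
  have hden : 1 - r ^ 2 ≠ 0 := sub_ne_zero.2 hr.symm
  refine ((hasDerivAt_const r (2 : ℝ)).div ((hasDerivAt_pow 2 r).const_sub 1) hden).congr_deriv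
    ?_
  simp only [conformalFactor]
  field_simp
  ring

lemma continuousOn_conformalFactor_Icc {R : ℝ} (hR : R < 1) :
    ContinuousOn conformalFactor (Icc 0 R) := fun _ hr =>
  (hasDerivAt_conformalFactor (sq_lt_one_of_mem_Icc hR hr).ne).continuousAt.continuousWithinAt

lemma HasDerivWithinAt.conformalFactor_rpow_mul {s : Set ℝ} {v : ℝ → ℝ} {v' c r : ℝ}
    (hr : r ^ 2 < 1) (hv : HasDerivWithinAt v v' s r) :
    HasDerivWithinAt (fun x => conformalFactor x ^ c * v x)
      (conformalFactor r ^ c * (c * r * conformalFactor r * v r + v')) s r := by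
  have hρ := conformalFactor_pos hr
  refine ((((hasDerivAt_conformalFactor hr.ne).rpow_const (p := c)
    (Or.inl hρ.ne')).hasDerivWithinAt).mul hv).congr_deriv ?_
  rw [rpow_sub_one hρ.ne']
  field_simp

lemma hyperbolic_integrand_eq {n c ρ r a b : ℝ} (hc : 2 * c + n = 2) (hρ : 0 < ρ)
    (hr : 0 < r) :
    (ρ ^ c * (c * r * ρ * a + b)) ^ 2 * ρ ^ (n - 2) * r ^ (n - 1)
      = n * (n - 2) / 4 * (ρ ^ 2 * a ^ 2 * r ^ (n + 1))
        + n * (n - 2) / 2 * (a ^ 2 * ρ * r ^ (n - 1)) + b ^ 2 * r ^ (n - 1)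
        + c * (ρ ^ 2 * a ^ 2 * r ^ (n + 1) + n * (a ^ 2 * ρ * r ^ (n - 1))
          + 2 * (ρ * r ^ n * (a * b))) := by
  have hρc : (ρ ^ c) ^ 2 * ρ ^ (n - 2) = 1 := by
    rw [← rpow_natCast, ← rpow_mul hρ.le, ← rpow_add hρ]
    norm_num [show c * 2 + (n - 2) = 0 by linarith]
  have hr1 : r ^ (n + 1) = r ^ (n - 1) * r ^ 2 := by
    rw [← rpow_natCast, ← rpow_add hr]; norm_num; ring_nf
  have hr2 : r ^ n = r ^ (n - 1) * r := by
    rw [← rpow_add_one hr.ne']; norm_num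
  have hn : n = 2 - 2 * c := by linarith
  calc _ = ((ρ ^ c) ^ 2 * ρ ^ (n - 2)) * (c * r * ρ * a + b) ^ 2 * r ^ (n - 1) := by ring
    _ = _ := by rw [hρc, hr1, hr2, hn]; ring

lemma integral_deriv_conformalFactor_mul_rpow_mul_sq {n R : ℝ} (hn : 1 ≤ n) (hR0 : 0 ≤ R)
    (hR1 : R < 1)
    {v v' : ℝ → ℝ} (hv : ∀ r ∈ Icc 0 R, HasDerivWithinAt v (v' r) (Icc 0 R) r)
    (hv' : ContinuousOn v' (Icc 0 R)) :
    ∫ r in 0..R, (conformalFactor r ^ 2 * v r ^ 2 * r ^ (n + 1)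
        + n * (v r ^ 2 * conformalFactor r * r ^ (n - 1))
        + 2 * (conformalFactor r * r ^ n * (v r * v' r)))
      = conformalFactor R * R ^ n * v R ^ 2 := by
  have hρ := continuousOn_conformalFactor_Icc hR1
  have hvc : ContinuousOn v (Icc 0 R) := fun r hr => (hv r hr).continuousWithinAt
  have hpow_sub := continuous_rpow_const (q := n - 1) (by linarith)
  have hpow := continuous_rpow_const (q := n) (by linarith)
  have hpow_add := continuous_rpow_const (q := n + 1) (by linarith)
  rw [integral_eq_sub_of_hasDeriv_right_of_le (f := fun r => conformalFactor r * r ^ n * v r ^ 2)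
    hR0 (by fun_prop) ?_ (ContinuousOn.intervalIntegrable_of_Icc hR0 (by fun_prop))]
  · simp [zero_rpow (by linarith : n ≠ 0)]
  intro r hr
  have hr0 : 0 < r := hr.1
  have hvr : HasDerivAt v (v' r) r :=
    (hv r (Ioo_subset_Icc_self hr)).hasDerivAt (Icc_mem_nhds hr.1 hr.2)
  have hρr := hasDerivAt_conformalFactor (sq_lt_one_of_mem_Icc hR1 (Ioo_subset_Icc_self hr)).ne
  refine (((hρr.mul (hasDerivAt_rpow_const (p := n) (Or.inl hr0.ne'))).mul
    (hvr.pow 2)).hasDerivWithinAt).congr_deriv ?_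
  simp only [Pi.mul_apply, Pi.pow_apply]
  rw [rpow_add_one hr0.ne', rpow_sub_one hr0.ne']
  field_simp
  ring

theorem hyperbolic_gradient_identity_general (n R : ℝ) (hn2 : 2 < n)
    (hR0 : 0 < R) (hR1 : R < 1)
    (ρ : ℝ → ℝ) (hρ : ρ = fun r : ℝ => 2 / (1 - r ^ 2))
    (v v' : ℝ → ℝ)
    (hv : ∀ r ∈ Icc (0:ℝ) R, HasDerivWithinAt v (v' r) (Icc 0 R) r)
    (hv'cont : ContinuousOn v' (Icc 0 R))
    (hvR : v R = 0)
    (u u' : ℝ → ℝ)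
    (hu : u = fun r : ℝ => ρ r ^ ((2 - n) / 2) * v r)
    (hu' : ∀ r ∈ Icc (0:ℝ) R, HasDerivWithinAt u (u' r) (Icc 0 R) r) :
    (∫ r in (0:ℝ)..R, (u' r) ^ 2 * ρ r ^ (n - 2) * r ^ (n - 1))
      = (n * (n - 2) / 4) * (∫ r in (0:ℝ)..R, ρ r ^ 2 * (v r) ^ 2 * r ^ (n + 1))
        + (n * (n - 2) / 2) * (∫ r in (0:ℝ)..R, (v r) ^ 2 * ρ r * r ^ (n - 1))
        + ∫ r in (0:ℝ)..R, (v' r) ^ 2 * r ^ (n - 1) := by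
  obtain rfl : ρ = conformalFactor := hρ
  subst hu
  have hu'_eq : ∀ r ∈ Icc 0 R, u' r = conformalFactor r ^ ((2 - n) / 2)
      * ((2 - n) / 2 * r * conformalFactor r * v r + v' r) := fun r hr =>
    (uniqueDiffOn_Icc hR0 r hr).eq_deriv _ (hu' r hr)
      ((hv r hr).conformalFactor_rpow_mul (sq_lt_one_of_mem_Icc hR1 hr))
  have hflux := integral_deriv_conformalFactor_mul_rpow_mul_sq (n := n) (by linarith) hR0.le hR1
    hv hv'cont
  have hρ := continuousOn_conformalFactor_Icc hR1
  have hvc : ContinuousOn v (Icc 0 R) := fun r hr => (hv r hr).continuousWithinAt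
  have hpow_sub := continuous_rpow_const (q := n - 1) (by linarith)
  have hpow := continuous_rpow_const (q := n) (by linarith)
  have hpow_add := continuous_rpow_const (q := n + 1) (by linarith)
  have hint {f : ℝ → ℝ} (hf : ContinuousOn f (Icc 0 R)) : IntervalIntegrable f volume 0 R :=
    hf.intervalIntegrable_of_Icc hR0.le
  calc _ = ∫ r in 0..R, (n * (n - 2) / 4 * (conformalFactor r ^ 2 * v r ^ 2 * r ^ (n + 1))
        + n * (n - 2) / 2 * (v r ^ 2 * conformalFactor r * r ^ (n - 1)) + v' r ^ 2 * r ^ (n - 1)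
        + (2 - n) / 2 * (conformalFactor r ^ 2 * v r ^ 2 * r ^ (n + 1)
          + n * (v r ^ 2 * conformalFactor r * r ^ (n - 1))
          + 2 * (conformalFactor r * r ^ n * (v r * v' r)))) := by
        refine integral_congr_ae (Eventually.of_forall fun r hr => ?_)
        rw [uIoc_of_le hR0.le] at hr
        have hr' := Ioc_subset_Icc_self hr
        rw [hu'_eq r hr']
        exact hyperbolic_integrand_eq (by ring)
          (conformalFactor_pos (sq_lt_one_of_mem_Icc hR1 hr')) hr.1
    _ = _ := by
        rw [integral_add (hint (by fun_prop)) (hint (by fun_prop)),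
          integral_add (hint (by fun_prop)) (hint (by fun_prop)),
          integral_add (hint (by fun_prop)) (hint (by fun_prop)),
          intervalIntegral.integral_const_mul, intervalIntegral.integral_const_mul,
          intervalIntegral.integral_const_mul, hflux, hvR]
        ring

/-- Equation (3.2): the integration-by-parts identity converting the hyperbolic
gradient term of the Brezis–Nirenberg quotient to Euclidean form, for
`u = ρ^{(2-n)/2} v` with `v ∈ C¹([0,R])`, `v(R) = 0`. -/
theorem hyperbolic_gradient_identity (n R : ℝ) (hn2 : 2 < n) (hn4 : n < 4)
    (hR0 : 0 < R) (hR1 : R < 1)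
    (ρ : ℝ → ℝ) (hρ : ρ = fun r : ℝ => 2 / (1 - r ^ 2))
    (v v' : ℝ → ℝ)
    (hv : ∀ r ∈ Icc (0:ℝ) R, HasDerivWithinAt v (v' r) (Icc 0 R) r)
    (hv'cont : ContinuousOn v' (Icc 0 R))
    (hvR : v R = 0)
    (u u' : ℝ → ℝ)
    (hu : u = fun r : ℝ => ρ r ^ ((2 - n) / 2) * v r)
    (hu' : ∀ r ∈ Icc (0:ℝ) R, HasDerivWithinAt u (u' r) (Icc 0 R) r) :
    (∫ r in (0:ℝ)..R, (u' r) ^ 2 * ρ r ^ (n - 2) * r ^ (n - 1))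
      = (n * (n - 2) / 4) * (∫ r in (0:ℝ)..R, ρ r ^ 2 * (v r) ^ 2 * r ^ (n + 1))
        + (n * (n - 2) / 2) * (∫ r in (0:ℝ)..R, (v r) ^ 2 * ρ r * r ^ (n - 1))
        + ∫ r in (0:ℝ)..R, (v' r) ^ 2 * r ^ (n - 1) :=
  hyperbolic_gradient_identity_general n R hn2 hR0 hR1 ρ hρ v v' hv hv'cont hvR u u' hu hu'
end

section
/- Let n be a real parameter with 2 < n < 4, let 0 < R < 1, ρ(r) = 2/(1−r²), and let φ : [0,R] → ℝ be twice continuously differentiable with φ(0) = 1, φ'(0) = 0, and φ(R) = 0. Then there exist constants C > 0 and ε0 > 0 such that for all ε ∈ (0, ε0): | ∫_0^R φ(r)²·(ε+r²)^{2−n}·ρ(r)²·r^{n−1} dr − ∫_0^R φ(r)²·r^{3−n}·ρ(r)² dr | ≤ C·ε^{(4−n)/2}. -/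
open Real Set

noncomputable section

/-!
The difference of the two integrals is `-∫₀ᴿ φ²ρ² D_ε` with the defect
`D_ε(r) = r^{3-n} - (ε+r²)^{2-n} r^{n-1} ≥ 0`, and `φ²ρ²` is bounded on `[0,R]`, so it suffices
to bound `∫₀ᴿ D_ε`. Split at `r = √ε`: near the origin `D_ε ≤ r^{3-n}`, which integrates to
`ε^{(4-n)/2}/(4-n)`; away from it, the mean value theorem for `t ↦ t^{2-n}` gives
`D_ε ≤ (n-2) ε r^{1-n}`, whose integral over `[√ε, R]` is at most `ε^{(4-n)/2}`.
-/

open MeasureTheory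

theorem rpow_sub_rpow_add_le {x ε s : ℝ} (hx : 0 < x) (hε : 0 ≤ ε) (hs : s ≤ 0) :
    x ^ s - (x + ε) ^ s ≤ -s * ε * x ^ (s - 1) := by
  have hcont : ContinuousOn (fun u : ℝ => u ^ s) (Ici x) := fun u hu =>
    (Real.continuousAt_rpow_const _ _ (Or.inl (hx.trans_le hu).ne')).continuousWithinAt
  have hdiff : DifferentiableOn ℝ (fun u : ℝ => u ^ s) (interior (Ici x)) := fun u hu => by
    rw [interior_Ici] at hu
    exact (Real.differentiableAt_rpow_const_of_ne s (hx.trans hu).ne').differentiableWithinAt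
  have hderiv : ∀ u ∈ interior (Ici x), s * x ^ (s - 1) ≤ deriv (fun u => u ^ s) u := by
    intro u hu
    rw [interior_Ici] at hu
    rw [Real.deriv_rpow_const]
    exact mul_le_mul_of_nonpos_left (Real.rpow_le_rpow_of_nonpos hx hu.le (by linarith)) hs
  have := (convex_Ici x).mul_sub_le_image_sub_of_le_deriv hcont hdiff hderiv
    x self_mem_Ici (x + ε) (by simpa using hε) (by linarith)
  linarith

theorem sq_rpow_mul_rpow {r : ℝ} (hr : 0 < r) (p q : ℝ) :
    (r ^ 2) ^ p * r ^ q = r ^ (2 * p + q) := by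
  rw [← Real.rpow_natCast_mul hr.le, Real.rpow_add hr]
  norm_num

theorem continuousOn_two_div_one_sub_sq :
    ContinuousOn (fun r : ℝ => 2 / (1 - r ^ 2)) (Ioo (-1) 1) :=
  continuousOn_const.div (by fun_prop) fun r hr => by nlinarith [hr.1, hr.2]

theorem abs_integral_mul_le_mul_integral {f g : ℝ → ℝ} {a b M : ℝ} (hab : a ≤ b)
    (hg : IntervalIntegrable g volume a b) (hg0 : ∀ x ∈ Ioc a b, 0 ≤ g x)
    (hfM : ∀ x ∈ Ioc a b, |f x| ≤ M) :
    |∫ x in a..b, f x * g x| ≤ M * ∫ x in a..b, g x := by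
  rw [← intervalIntegral.integral_const_mul]
  refine intervalIntegral.norm_integral_le_of_norm_le (f := fun x => f x * g x) hab
    (Filter.Eventually.of_forall fun x hx => ?_) (hg.const_mul M)
  rw [Real.norm_eq_abs, abs_mul, abs_of_nonneg (hg0 x hx)]
  exact mul_le_mul_of_nonneg_right (hfM x hx) (hg0 x hx)

def bubbleDensity (n ε r : ℝ) : ℝ := (ε + r ^ 2) ^ (2 - n) * r ^ (n - 1)

def bubbleDefect (n ε r : ℝ) : ℝ := r ^ (3 - n) - bubbleDensity n ε r

section bubble

variable {n ε r : ℝ}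

theorem continuous_bubbleDensity (hn1 : 1 ≤ n) (hε : 0 < ε) : Continuous (bubbleDensity n ε) :=
  ((continuous_const.add (continuous_pow 2)).rpow_const
    fun r => Or.inl (by positivity : 0 < ε + r ^ 2).ne').mul
    (continuous_id.rpow_const fun _ => Or.inr (by linarith))

theorem bubbleDefect_eq (hr : 0 < r) :
    bubbleDefect n ε r = ((r ^ 2) ^ (2 - n) - (ε + r ^ 2) ^ (2 - n)) * r ^ (n - 1) := by
  rw [bubbleDefect, bubbleDensity, sub_mul, sq_rpow_mul_rpow hr]
  ring_nf

theorem bubbleDefect_nonneg (hn : 2 ≤ n) (hε : 0 ≤ ε) (hr : 0 < r) :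
    0 ≤ bubbleDefect n ε r := by
  rw [bubbleDefect_eq hr]
  have : (ε + r ^ 2) ^ (2 - n) ≤ (r ^ 2) ^ (2 - n) :=
    Real.rpow_le_rpow_of_nonpos (by positivity) (by linarith) (by linarith)
  exact mul_nonneg (sub_nonneg.2 this) (by positivity)

theorem bubbleDefect_le_rpow (hε : 0 ≤ ε) (hr : 0 ≤ r) : bubbleDefect n ε r ≤ r ^ (3 - n) :=
  sub_le_self _ (by unfold bubbleDensity; positivity)

theorem bubbleDefect_le_mul_rpow (hn : 2 ≤ n) (hε : 0 ≤ ε) (hr : 0 < r) :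
    bubbleDefect n ε r ≤ (n - 2) * ε * r ^ (1 - n) := by
  have key := rpow_sub_rpow_add_le (pow_pos hr 2) hε (by linarith : 2 - n ≤ 0)
  rw [add_comm (r ^ 2)] at key
  calc bubbleDefect n ε r ≤ -(2 - n) * ε * (r ^ 2) ^ (2 - n - 1) * r ^ (n - 1) := by
        rw [bubbleDefect_eq hr]; gcongr
    _ = (n - 2) * ε * r ^ (1 - n) := by
        rw [mul_assoc _ ((r ^ 2) ^ _), sq_rpow_mul_rpow hr]; ring_nf

theorem continuousOn_bubbleDefect (hε : 0 ≤ ε) : ContinuousOn (bubbleDefect n ε) (Ioi 0) := by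
  intro r (hr : 0 < r)
  have : 0 < ε + r ^ 2 := by positivity
  exact ((continuousAt_id.rpow_const (Or.inl hr.ne')).sub
    (((continuousAt_const.add (continuousAt_id.pow 2)).rpow_const (Or.inl this.ne')).mul
      (continuousAt_id.rpow_const (Or.inl hr.ne')))).continuousWithinAt

theorem intervalIntegrable_bubbleDefect (hn1 : 1 ≤ n) (hn4 : n < 4) (hε : 0 < ε) (a b : ℝ) :
    IntervalIntegrable (bubbleDefect n ε) volume a b :=
  (intervalIntegral.intervalIntegrable_rpow' (by linarith)).sub
    ((continuous_bubbleDensity hn1 hε).intervalIntegrable a b)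

theorem integral_bubbleDefect_near_le (hn1 : 1 ≤ n) (hn4 : n < 4) (hε : 0 < ε) :
    ∫ r in 0..√ε, bubbleDefect n ε r ≤ ε ^ ((4 - n) / 2) / (4 - n) := by
  calc ∫ r in 0..√ε, bubbleDefect n ε r ≤ ∫ r in 0..√ε, r ^ (3 - n) :=
        intervalIntegral.integral_mono_on (sqrt_nonneg ε)
          (intervalIntegrable_bubbleDefect hn1 hn4 hε _ _)
          (intervalIntegral.intervalIntegrable_rpow' (by linarith))
          fun r hr => bubbleDefect_le_rpow hε.le hr.1
    _ = ε ^ ((4 - n) / 2) / (4 - n) := by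
        rw [integral_rpow (Or.inl (by linarith)), rpow_div_two_eq_sqrt _ hε.le,
          zero_rpow (by linarith)]
        ring_nf

theorem integral_bubbleDefect_far_le (hn2 : 2 < n) (hε : 0 < ε) {R : ℝ} (hεR : √ε ≤ R) :
    ∫ r in √ε..R, bubbleDefect n ε r ≤ ε ^ ((4 - n) / 2) := by
  have hpos : ∀ r ∈ uIcc √ε R, 0 < r := fun r hr =>
    (sqrt_pos.2 hε).trans_le (by rw [uIcc_of_le hεR] at hr; exact hr.1)
  calc ∫ r in √ε..R, bubbleDefect n ε r ≤ ∫ r in √ε..R, (n - 2) * ε * r ^ (1 - n) :=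
        intervalIntegral.integral_mono_on hεR
          ((continuousOn_bubbleDefect hε.le).mono hpos).intervalIntegrable
          ((intervalIntegral.intervalIntegrable_rpow
            (Or.inr fun h => (hpos 0 h).false)).const_mul _)
          fun r hr => bubbleDefect_le_mul_rpow hn2.le hε.le (hpos r (Icc_subset_uIcc hr))
    _ = ε * (√ε ^ (2 - n) - R ^ (2 - n)) := by
        rw [intervalIntegral.integral_const_mul,
          integral_rpow (Or.inr ⟨by linarith, fun h => (hpos 0 h).false⟩),
          show (1 : ℝ) - n + 1 = 2 - n by ring]
        have : (2 : ℝ) - n ≠ 0 := by linarith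
        field_simp
        ring
    _ ≤ ε * √ε ^ (2 - n) := by
        gcongr
        exact sub_le_self _ (rpow_nonneg ((sqrt_nonneg ε).trans hεR) _)
    _ = ε ^ ((4 - n) / 2) := by
        rw [← rpow_div_two_eq_sqrt _ hε.le, show (4 - n) / 2 = 1 + (2 - n) / 2 by ring,
          rpow_add hε, rpow_one]

theorem integral_bubbleDefect_le (hn2 : 2 < n) (hn4 : n < 4) (hε : 0 < ε) {R : ℝ}
    (hεR : √ε ≤ R) :
    ∫ r in 0..R, bubbleDefect n ε r ≤ (1 / (4 - n) + 1) * ε ^ ((4 - n) / 2) := by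
  have hn1 : 1 ≤ n := by linarith
  rw [← intervalIntegral.integral_add_adjacent_intervals
    (intervalIntegrable_bubbleDefect hn1 hn4 hε 0 √ε)
    (intervalIntegrable_bubbleDefect hn1 hn4 hε √ε R)]
  calc _ ≤ ε ^ ((4 - n) / 2) / (4 - n) + ε ^ ((4 - n) / 2) :=
        add_le_add (integral_bubbleDefect_near_le hn1 hn4 hε)
          (integral_bubbleDefect_far_le hn2 hε hεR)
    _ = (1 / (4 - n) + 1) * ε ^ ((4 - n) / 2) := by ring

theorem integral_mul_bubbleDensity_sub {q : ℝ → ℝ} {R : ℝ} (hq : ContinuousOn q (uIcc 0 R))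
    (hn1 : 1 ≤ n) (hn4 : n < 4) (hε : 0 < ε) :
    (∫ r in 0..R, q r * bubbleDensity n ε r) - ∫ r in 0..R, q r * r ^ (3 - n)
      = -∫ r in 0..R, q r * bubbleDefect n ε r := by
  have hqE : IntervalIntegrable (fun r => q r * bubbleDensity n ε r) volume 0 R :=
    (hq.mul (continuous_bubbleDensity hn1 hε).continuousOn).intervalIntegrable
  have hqG : IntervalIntegrable (fun r => q r * r ^ (3 - n)) volume 0 R :=
    (intervalIntegral.intervalIntegrable_rpow' (by linarith)).continuousOn_mul hq
  rw [← intervalIntegral.integral_sub hqE hqG, ← intervalIntegral.integral_neg]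
  congr 1; ext r; rw [bubbleDefect]; ring

theorem abs_integral_mul_bubbleDefect_le {q : ℝ → ℝ} {R M : ℝ} (hn2 : 2 < n) (hn4 : n < 4)
    (hε : 0 < ε) (hεR : √ε ≤ R) (hqM : ∀ r ∈ Ioc 0 R, |q r| ≤ M) :
    |∫ r in 0..R, q r * bubbleDefect n ε r| ≤ M * ((1 / (4 - n) + 1) * ε ^ ((4 - n) / 2)) := by
  have hR : 0 < R := (sqrt_pos.2 hε).trans_le hεR
  have hM : 0 ≤ M := (abs_nonneg _).trans (hqM R ⟨hR, le_rfl⟩)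
  calc _ ≤ M * ∫ r in 0..R, bubbleDefect n ε r :=
        abs_integral_mul_le_mul_integral hR.le
          (intervalIntegrable_bubbleDefect (by linarith) hn4 hε 0 R)
          (fun r hr => bubbleDefect_nonneg hn2.le hε.le hr.1) hqM
    _ ≤ M * ((1 / (4 - n) + 1) * ε ^ ((4 - n) / 2)) := by
        gcongr
        exact integral_bubbleDefect_le hn2 hn4 hε hεR

end bubble

theorem l2_term_asymptotics_general (n R : ℝ) (hn2 : 2 < n) (hn4 : n < 4)
    (hR0 : 0 < R) (hR1 : R < 1)
    (ρ : ℝ → ℝ) (hρ : ρ = fun r : ℝ => 2 / (1 - r ^ 2))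
    (φ : ℝ → ℝ) (hφ : ContDiffOn ℝ 2 φ (Icc 0 R)) :
    ∃ C > (0:ℝ), ∃ ε0 > (0:ℝ), ∀ ε ∈ Ioo (0:ℝ) ε0,
      |(∫ r in (0:ℝ)..R, (φ r) ^ 2 * (ε + r ^ 2) ^ (2 - n) * (ρ r) ^ 2 * r ^ (n - 1))
        - ∫ r in (0:ℝ)..R, (φ r) ^ 2 * r ^ (3 - n) * (ρ r) ^ 2|
      ≤ C * ε ^ ((4 - n) / 2) := by
  set q : ℝ → ℝ := fun r => φ r ^ 2 * ρ r ^ 2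
  have hρc : ContinuousOn ρ (Icc 0 R) :=
    hρ ▸ continuousOn_two_div_one_sub_sq.mono fun r hr => ⟨by linarith [hr.1], hr.2.trans_lt hR1⟩
  have hq : ContinuousOn q (uIcc 0 R) :=
    uIcc_of_le hR0.le ▸ (hφ.continuousOn.pow 2).mul (hρc.pow 2)
  obtain ⟨M, hM⟩ := isCompact_uIcc.exists_bound_of_continuousOn hq
  have h4n : 0 < 4 - n := by linarith
  refine ⟨(|M| + 1) * (1 / (4 - n) + 1), by positivity, R ^ 2, by positivity,
    fun ε ⟨hε, hεR⟩ => ?_⟩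
  have hF : (fun r => φ r ^ 2 * (ε + r ^ 2) ^ (2 - n) * ρ r ^ 2 * r ^ (n - 1))
      = fun r => q r * bubbleDensity n ε r := by
    ext r; simp only [q, bubbleDensity]; ring
  have hG : (fun r => φ r ^ 2 * r ^ (3 - n) * ρ r ^ 2) = fun r => q r * r ^ (3 - n) := by
    ext r; ring
  rw [hF, hG, integral_mul_bubbleDensity_sub hq (by linarith) hn4 hε, abs_neg]
  calc _ ≤ M * ((1 / (4 - n) + 1) * ε ^ ((4 - n) / 2)) :=
        abs_integral_mul_bubbleDefect_le hn2 hn4 hε ((sqrt_le_left hR0.le).2 hεR.le)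
          fun r hr => hM r (Ioc_subset_Icc_self.trans Icc_subset_uIcc hr)
    _ ≤ (|M| + 1) * (1 / (4 - n) + 1) * ε ^ ((4 - n) / 2) := by
        rw [← mul_assoc]; gcongr; linarith [le_abs_self M]

/-- Claim 3.1: asymptotics, as `ε → 0⁺`, of the `L²`-type term
`∫_0^R φ²(ε+r²)^{2-n} ρ² r^{n-1} dr` of the Brezis–Nirenberg quotient for the
test function `v_ε(r) = φ(r)(ε+r²)^{-(n-2)/2}`. -/
theorem l2_term_asymptotics (n R : ℝ) (hn2 : 2 < n) (hn4 : n < 4)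
    (hR0 : 0 < R) (hR1 : R < 1)
    (ρ : ℝ → ℝ) (hρ : ρ = fun r : ℝ => 2 / (1 - r ^ 2))
    (φ : ℝ → ℝ) (hφ : ContDiffOn ℝ 2 φ (Icc 0 R))
    (hφ0 : φ 0 = 1) (hφ'0 : derivWithin φ (Icc 0 R) 0 = 0) (hφR : φ R = 0) :
    ∃ C > (0:ℝ), ∃ ε0 > (0:ℝ), ∀ ε ∈ Ioo (0:ℝ) ε0,
      |(∫ r in (0:ℝ)..R, (φ r) ^ 2 * (ε + r ^ 2) ^ (2 - n) * (ρ r) ^ 2 * r ^ (n - 1))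
        - ∫ r in (0:ℝ)..R, (φ r) ^ 2 * r ^ (3 - n) * (ρ r) ^ 2|
      ≤ C * ε ^ ((4 - n) / 2) :=
  l2_term_asymptotics_general n R hn2 hn4 hR0 hR1 ρ hρ φ hφ

end
end

section
/- Let n be a real parameter with 2 < n < 4, let R > 0, and let φ : [0,R] → ℝ be twice continuously differentiable with φ(0) = 1, φ'(0) = 0, and φ(R) = 0. For ε > 0 set v_ε(r) = φ(r)·(ε+r²)^{−(n−2)/2}. Then there exist constants C > 0 and ε0 > 0 such that for all ε ∈ (0, ε0): | ∫_0^R v_ε'(r)²·r^{n−1} dr − ∫_0^R φ'(r)²·r^{3−n} dr − (n·(n−2)·Γ(n/2)²/(2·Γ(n)))·ε^{(2−n)/2} | ≤ C·ε^{(4−n)/2}. -/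
/-!
Write `X = ε + r²`. Then `v_ε'(r)² r^{n-1}` is
`φ'² X^{2-n} r^{n-1} - 2(n-2) φ φ' r^n X^{1-n} + (n-2)² (φ² - 1) r^{n+1} X^{-n}`
`+ (n-2)² r^{n+1} X^{-n}`.
In the first three terms, replacing `X^{-p}` by its value `r^{-2p}` at `ε = 0` costs at most
`C min(r^{3-n}, ε r^{1-n})` pointwise, because `|φ'| ≤ C r` and `|φ² - 1| ≤ C r²`; splitting at
`r = √ε`, this error integrates to `O(ε^{(4-n)/2})`. After the replacement, the first term is
`φ'² r^{3-n}` and the next two form the derivative of `-(n-2)(φ² - 1) r^{2-n}`, which integrates to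
`(n-2) R^{2-n}`. In the last term the substitution `r = √ε s` gives `ε^{(2-n)/2}` times
`∫_0^{R/√ε} s^{n+1} (1 + s²)^{-n} ds`, a Beta integral of value `n/(n-2) · Γ(n/2)²/(2Γ(n))` up to
its tail, and the tail is `(R/√ε)^{2-n}/(n-2) + O((R/√ε)^{-n})`; after scaling by
`(n-2)² ε^{(2-n)/2}` it cancels the boundary term `(n-2) R^{2-n}` up to `O(ε)`.
-/

open Real Set MeasureTheory Filter Topology

attribute [local fun_prop] ContinuousOn.rpow_const Continuous.rpow_const

theorem integral_rpow_mul_one_sub_rpow_eq {a b : ℝ} (ha : 0 < a) (hb : 0 < b) :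
    ∫ x in (0:ℝ)..1, x ^ (a - 1) * (1 - x) ^ (b - 1) = Gamma a * Gamma b / Gamma (a + b) := by
  have h := Complex.betaIntegral_eq_Gamma_mul_div a b (by simpa using ha) (by simpa using hb)
  rw [← Complex.ofReal_add, Complex.Gamma_ofReal, Complex.Gamma_ofReal, Complex.Gamma_ofReal] at h
  rw [← Complex.ofReal_inj, ← intervalIntegral.integral_ofReal]
  push_cast
  rw [← h, Complex.betaIntegral]
  refine intervalIntegral.integral_congr fun x hx => ?_
  rw [uIcc_of_le zero_le_one] at hx
  rw [Complex.ofReal_cpow hx.1, Complex.ofReal_cpow (sub_nonneg.2 hx.2)]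
  push_cast
  ring

theorem integral_Ioi_rpow_mul_one_add_rpow_neg_eq {a b : ℝ} (ha : 0 < a) (hb : 0 < b) :
    ∫ t in Ioi (0:ℝ), t ^ (a - 1) * (1 + t) ^ (-(a + b)) = Gamma a * Gamma b / Gamma (a + b) := by
  have hderiv : ∀ x ∈ Ioo (0:ℝ) 1,
      HasDerivWithinAt (fun x => x / (1 - x)) (((1 - x) ^ 2)⁻¹) (Ioo 0 1) x := fun x hx => by
    have hx1 : 1 - x ≠ 0 := by linarith [hx.2]
    refine ((hasDerivAt_id' x).div ((hasDerivAt_id' x).const_sub 1) hx1).hasDerivWithinAt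
      |>.congr_deriv ?_
    field_simp
    ring
  have hinj : InjOn (fun x : ℝ => x / (1 - x)) (Ioo 0 1) := fun x hx y hy hxy => by
    have hx1 : 1 - x ≠ 0 := by linarith [hx.2]
    have hy1 : 1 - y ≠ 0 := by linarith [hy.2]
    simp only [div_eq_div_iff hx1 hy1] at hxy
    linarith
  have himage : (fun x : ℝ => x / (1 - x)) '' Ioo 0 1 = Ioi 0 := by
    refine Subset.antisymm ?_ fun t (ht : 0 < t) => ⟨t / (1 + t), ?_, ?_⟩
    · rintro _ ⟨x, hx, rfl⟩
      exact div_pos hx.1 (by linarith [hx.2])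
    · exact ⟨by positivity, (div_lt_one (by positivity)).2 (by linarith)⟩
    · have : 1 + t ≠ 0 := by positivity
      field_simp
      ring
  have hintegrand : ∀ x ∈ Ioo (0:ℝ) 1,
      |((1 - x) ^ 2)⁻¹| • ((x / (1 - x)) ^ (a - 1) * (1 + x / (1 - x)) ^ (-(a + b)))
        = x ^ (a - 1) * (1 - x) ^ (b - 1) := fun x hx => by
    have hy : 0 < 1 - x := by linarith [hx.2]
    have hsplit : (1 - x) ^ (a + b) = (1 - x) ^ (a - 1) * (1 - x) ^ (b - 1) * (1 - x) ^ 2 := by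
      rw [← rpow_natCast, ← rpow_add hy, ← rpow_add hy]
      ring_nf
    rw [abs_of_pos (by positivity), smul_eq_mul, div_rpow hx.1.le hy.le,
      show 1 + x / (1 - x) = (1 - x)⁻¹ by field_simp; ring, inv_rpow hy.le, rpow_neg hy.le,
      inv_inv, hsplit]
    field_simp
  rw [← himage, integral_image_eq_integral_abs_deriv_smul measurableSet_Ioo hderiv hinj,
    setIntegral_congr_fun measurableSet_Ioo hintegrand, ← integral_Ioc_eq_integral_Ioo,
    ← intervalIntegral.integral_of_le zero_le_one, integral_rpow_mul_one_sub_rpow_eq ha hb]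

theorem integral_Ioi_rpow_mul_one_add_sq_rpow_neg_eq {a b : ℝ} (ha : 0 < a) (hb : 0 < b) :
    ∫ s in Ioi (0:ℝ), s ^ (2 * a - 1) * (1 + s ^ 2) ^ (-(a + b))
      = Gamma a * Gamma b / (2 * Gamma (a + b)) := by
  have h := integral_comp_rpow_Ioi_of_pos two_pos
    (g := fun t : ℝ => t ^ (a - 1) * (1 + t) ^ (-(a + b)))
  rw [integral_Ioi_rpow_mul_one_add_rpow_neg_eq ha hb] at h
  rw [div_mul_eq_div_div_swap, ← h, ← integral_div]
  refine setIntegral_congr_fun measurableSet_Ioi fun s (hs : 0 < s) => ?_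
  rw [smul_eq_mul, ← rpow_mul hs.le, rpow_two, show (2:ℝ) * a - 1 = 2 * (a - 1) + 1 by ring,
    rpow_add_one hs.ne']
  norm_num
  ring

theorem integral_Ioi_rpow_add_one_mul_one_add_sq_rpow_neg_eq {n : ℝ} (hn : 2 < n) :
    ∫ s in Ioi (0:ℝ), s ^ (n + 1) * (1 + s ^ 2) ^ (-n)
      = n / (n - 2) * (Gamma (n / 2) ^ 2 / (2 * Gamma n)) := by
  have h := integral_Ioi_rpow_mul_one_add_sq_rpow_neg_eq (a := n / 2 + 1) (b := n / 2 - 1)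
    (by positivity) (by linarith)
  rw [show 2 * (n / 2 + 1) - 1 = n + 1 by ring, show n / 2 + 1 + (n / 2 - 1) = n by ring,
    Gamma_add_one (by positivity)] at h
  have hΓ : Gamma (n / 2) = (n / 2 - 1) * Gamma (n / 2 - 1) := by
    simpa using Gamma_add_one (s := n / 2 - 1) (by linarith)
  rw [h, hΓ]
  have : n - 2 ≠ 0 := by linarith
  field_simp

theorem one_sub_mul_le_one_add_rpow_neg {p u : ℝ} (hp : 0 ≤ p) (hu : 0 ≤ u) :
    1 - p * u ≤ (1 + u) ^ (-p) := by
  have h1u : 0 < 1 + u := by linarith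
  calc 1 - p * u ≤ exp (-(p * u)) := by linarith [add_one_le_exp (-(p * u))]
    _ ≤ exp (log (1 + u) * -p) := by
        gcongr
        nlinarith [log_le_sub_one_of_pos h1u]
    _ = (1 + u) ^ (-p) := (rpow_def_of_pos h1u _).symm

theorem rpow_neg_sub_rpow_neg_add_le {x e p : ℝ} (hx : 0 < x) (he : 0 ≤ e) (hp : 0 ≤ p) :
    x ^ (-p) - (x + e) ^ (-p) ≤ p * e * x ^ (-p - 1) := by
  have hsplit : (x + e) ^ (-p) = x ^ (-p) * (1 + e / x) ^ (-p) := by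
    rw [← mul_rpow hx.le (by positivity), mul_add, mul_one, mul_div_cancel₀ _ hx.ne']
  have hbern := one_sub_mul_le_one_add_rpow_neg hp (div_nonneg he hx.le)
  have hx' : x ^ (-p - 1) = x ^ (-p) / x := by rw [rpow_sub_one hx.ne']
  rw [hsplit, hx']
  calc x ^ (-p) - x ^ (-p) * (1 + e / x) ^ (-p) ≤ x ^ (-p) - x ^ (-p) * (1 - p * (e / x)) := by
        gcongr
    _ = p * e * (x ^ (-p) / x) := by ring

theorem rpow_neg_two_mul_sub_add_sq_rpow_neg_mem_Icc {r ε p : ℝ} (hr : 0 < r) (hε : 0 ≤ ε)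
    (hp : 0 ≤ p) :
    r ^ (-2 * p) - (ε + r ^ 2) ^ (-p) ∈ Icc 0 (p * ε * r ^ (-2 * p - 2)) := by
  have hsq : ∀ y : ℝ, (r ^ 2) ^ y = r ^ (2 * y) := fun y => by
    rw [← rpow_natCast_mul hr.le]; norm_num
  have hlo : (ε + r ^ 2) ^ (-p) ≤ (r ^ 2) ^ (-p) :=
    rpow_le_rpow_of_nonpos (by positivity) (le_add_of_nonneg_left hε) (neg_nonpos.2 hp)
  have hhi := rpow_neg_sub_rpow_neg_add_le (pow_pos hr 2) hε hp
  rw [hsq, add_comm, hsq] at hhi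
  rw [hsq] at hlo
  rw [show -2 * p - 2 = 2 * (-p - 1) by ring, show -2 * p = 2 * -p by ring]
  exact ⟨by linarith, hhi⟩

theorem rpow_add_mul_abs_add_sq_rpow_neg_sub_le {r ε p : ℝ} (hr : 0 < r) (hε : 0 ≤ ε)
    (hp : 0 ≤ p) (m : ℝ) :
    r ^ (m + 2 * p) * |(ε + r ^ 2) ^ (-p) - r ^ (-2 * p)|
      ≤ max 1 p * min (r ^ m) (ε * r ^ (m - 2)) := by
  obtain ⟨hlo, hhi⟩ := rpow_neg_two_mul_sub_add_sq_rpow_neg_mem_Icc hr hε hp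
  rw [abs_sub_comm, abs_of_nonneg hlo]
  have hm : r ^ (m + 2 * p) * r ^ (-2 * p) = r ^ m := by rw [← rpow_add hr]; ring_nf
  have hm2 : r ^ (m + 2 * p) * r ^ (-2 * p - 2) = r ^ (m - 2) := by rw [← rpow_add hr]; ring_nf
  have hX : 0 ≤ (ε + r ^ 2) ^ (-p) := by positivity
  rw [mul_min_of_nonneg _ _ (by positivity)]
  refine le_min ?_ ?_
  · calc _ ≤ r ^ (m + 2 * p) * r ^ (-2 * p) := by gcongr; linarith
      _ ≤ max 1 p * r ^ m := by
          rw [hm]; exact le_mul_of_one_le_left (by positivity) (le_max_left _ _)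
  · calc _ ≤ r ^ (m + 2 * p) * (p * ε * r ^ (-2 * p - 2)) := by gcongr
      _ = p * (ε * r ^ (m - 2)) := by rw [← hm2]; ring
      _ ≤ max 1 p * (ε * r ^ (m - 2)) := by gcongr; exact le_max_right _ _

theorem rpow_sub_rpow_mul_one_add_sq_rpow_neg_mem_Icc {n s : ℝ} (hn : 0 ≤ n) (hs : 0 < s) :
    s ^ (1 - n) - s ^ (n + 1) * (1 + s ^ 2) ^ (-n) ∈ Icc 0 (n * s ^ (-1 - n)) := by
  obtain ⟨hlo, hhi⟩ := rpow_neg_two_mul_sub_add_sq_rpow_neg_mem_Icc hs zero_le_one hn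
  have h1 : s ^ (1 - n) = s ^ (n + 1) * s ^ (-2 * n) := by rw [← rpow_add hs]; ring_nf
  have h2 : s ^ (-1 - n) = s ^ (n + 1) * s ^ (-2 * n - 2) := by rw [← rpow_add hs]; ring_nf
  have hpos : 0 ≤ s ^ (n + 1) := by positivity
  rw [h1, h2, ← mul_sub]
  exact ⟨mul_nonneg hpos hlo, by nlinarith⟩

theorem integrableOn_Ioi_rpow_mul_one_add_sq_rpow_neg {n T : ℝ} (hn : 2 < n) (hT : 0 < T) :
    IntegrableOn (fun s : ℝ => s ^ (n + 1) * (1 + s ^ 2) ^ (-n)) (Ioi T) := by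
  refine (integrableOn_Ioi_rpow_of_lt (by linarith : 1 - n < -1) hT).mono' ?_ ?_
  · exact (by fun_prop (disch := intro x; first | (right; linarith) | (left; positivity)) :
      Continuous fun s : ℝ => s ^ (n + 1) * (1 + s ^ 2) ^ (-n)).aestronglyMeasurable
  · refine (ae_restrict_iff' measurableSet_Ioi).2 (ae_of_all _ fun s (hs : T < s) => ?_)
    have hs0 : 0 < s := hT.trans hs
    rw [norm_of_nonneg (by positivity)]
    linarith [(rpow_sub_rpow_mul_one_add_sq_rpow_neg_mem_Icc (by linarith : 0 ≤ n) hs0).1]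

theorem abs_intervalIntegral_sub_integral_Ioi_add_le {n T : ℝ} (hn : 2 < n) (hT : 0 < T) :
    |(∫ s in (0:ℝ)..T, s ^ (n + 1) * (1 + s ^ 2) ^ (-n))
        - (∫ s in Ioi (0:ℝ), s ^ (n + 1) * (1 + s ^ 2) ^ (-n)) + T ^ (2 - n) / (n - 2)|
      ≤ T ^ (-n) := by
  set f : ℝ → ℝ := fun s => s ^ (n + 1) * (1 + s ^ 2) ^ (-n)
  have hf : Continuous f := by
    fun_prop (disch := intro x; first | (right; linarith) | (left; positivity))
  have hfT := integrableOn_Ioi_rpow_mul_one_add_sq_rpow_neg hn hT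
  have hpow1 : IntegrableOn (fun s : ℝ => s ^ (1 - n)) (Ioi T) :=
    integrableOn_Ioi_rpow_of_lt (by linarith) hT
  have hpow2 : IntegrableOn (fun s : ℝ => n * s ^ (-1 - n)) (Ioi T) :=
    (integrableOn_Ioi_rpow_of_lt (by linarith) hT).const_mul n
  have hsplit : ∫ s in Ioi (0:ℝ), f s = (∫ s in (0:ℝ)..T, f s) + ∫ s in Ioi T, f s := by
    rw [intervalIntegral.integral_of_le hT.le, ← setIntegral_union (Ioc_disjoint_Ioi le_rfl)
      measurableSet_Ioi (hf.integrableOn_Icc.mono_set Ioc_subset_Icc_self) hfT,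
      Ioc_union_Ioi_eq_Ioi hT.le]
  have hpow1_eq : ∫ s in Ioi T, s ^ (1 - n) = T ^ (2 - n) / (n - 2) := by
    rw [integral_Ioi_rpow_of_lt (by linarith) hT, show 1 - n + 1 = 2 - n by ring,
      neg_div, ← div_neg, neg_sub]
  have hpow2_eq : ∫ s in Ioi T, n * s ^ (-1 - n) = T ^ (-n) := by
    rw [integral_const_mul, integral_Ioi_rpow_of_lt (by linarith) hT,
      show -1 - n + 1 = -n by ring]
    field_simp
  have hgap : ∫ s in Ioi T, (s ^ (1 - n) - f s) ≤ ∫ s in Ioi T, n * s ^ (-1 - n) :=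
    setIntegral_mono_on (hpow1.sub hfT) hpow2 measurableSet_Ioi fun s (hs : T < s) =>
      (rpow_sub_rpow_mul_one_add_sq_rpow_neg_mem_Icc (by linarith) (hT.trans hs)).2
  have hgap0 : 0 ≤ ∫ s in Ioi T, (s ^ (1 - n) - f s) :=
    setIntegral_nonneg measurableSet_Ioi fun s (hs : T < s) =>
      (rpow_sub_rpow_mul_one_add_sq_rpow_neg_mem_Icc (by linarith) (hT.trans hs)).1
  rw [integral_sub hpow1 hfT, hpow1_eq, hpow2_eq] at hgap
  rw [integral_sub hpow1 hfT, hpow1_eq] at hgap0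
  rw [hsplit, abs_le]
  constructor <;> linarith

theorem integral_rpow_mul_add_sq_rpow_neg_eq {n R ε : ℝ} (hR : 0 ≤ R) (hε : 0 < ε) :
    ∫ r in (0:ℝ)..R, r ^ (n + 1) * (ε + r ^ 2) ^ (-n)
      = ε ^ ((2 - n) / 2) * ∫ s in (0:ℝ)..R / √ε, s ^ (n + 1) * (1 + s ^ 2) ^ (-n) := by
  have hσ : 0 < √ε := sqrt_pos.2 hε
  have h := intervalIntegral.integral_comp_mul_left
    (fun r : ℝ => r ^ (n + 1) * (ε + r ^ 2) ^ (-n)) hσ.ne' (a := 0) (b := R / √ε)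
  rw [mul_zero, mul_div_cancel₀ _ hσ.ne', smul_eq_mul, eq_inv_mul_iff_mul_eq₀ hσ.ne'] at h
  rw [← h, ← intervalIntegral.integral_const_mul, ← intervalIntegral.integral_const_mul]
  refine intervalIntegral.integral_congr fun s hs => ?_
  rw [uIcc_of_le (by positivity)] at hs
  have hscale : ε + (√ε * s) ^ 2 = ε * (1 + s ^ 2) := by
    rw [mul_pow, sq_sqrt hε.le]; ring
  have hpow : √ε * (√ε ^ (n + 1) * ε ^ (-n)) = ε ^ ((2 - n) / 2) := by
    rw [← rpow_div_two_eq_sqrt _ hε.le, sqrt_eq_rpow, ← rpow_add hε, ← rpow_add hε]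
    ring_nf
  rw [hscale, mul_rpow hσ.le hs.1, mul_rpow hε.le (by positivity), ← hpow]
  ring

theorem abs_integral_rpow_mul_add_sq_rpow_neg_sub_le {n R ε : ℝ} (hn : 2 < n) (hR : 0 < R)
    (hε : 0 < ε) :
    |(∫ r in (0:ℝ)..R, r ^ (n + 1) * (ε + r ^ 2) ^ (-n))
        - n / (n - 2) * (Gamma (n / 2) ^ 2 / (2 * Gamma n)) * ε ^ ((2 - n) / 2)
        + R ^ (2 - n) / (n - 2)|
      ≤ R ^ (-n) * ε := by
  have hT : 0 < R / √ε := div_pos hR (sqrt_pos.2 hε)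
  have htail := abs_intervalIntegral_sub_integral_Ioi_add_le hn hT
  rw [integral_Ioi_rpow_add_one_mul_one_add_sq_rpow_neg_eq hn] at htail
  have hTpow : ∀ y, ε ^ ((2 - n) / 2) * (R / √ε) ^ y = R ^ y * ε ^ ((2 - n - y) / 2) := by
    intro y
    rw [div_rpow hR.le (sqrt_nonneg ε), ← rpow_div_two_eq_sqrt _ hε.le, sub_div _ y,
      rpow_sub hε]
    ring
  have hrescale : (∫ r in (0:ℝ)..R, r ^ (n + 1) * (ε + r ^ 2) ^ (-n))
        - n / (n - 2) * (Gamma (n / 2) ^ 2 / (2 * Gamma n)) * ε ^ ((2 - n) / 2)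
        + R ^ (2 - n) / (n - 2)
      = ε ^ ((2 - n) / 2) * ((∫ s in (0:ℝ)..R / √ε, s ^ (n + 1) * (1 + s ^ 2) ^ (-n))
        - n / (n - 2) * (Gamma (n / 2) ^ 2 / (2 * Gamma n)) + (R / √ε) ^ (2 - n) / (n - 2)) := by
    have hbdry : ε ^ ((2 - n) / 2) * (R / √ε) ^ (2 - n) = R ^ (2 - n) := by
      rw [hTpow, sub_self, zero_div, rpow_zero, mul_one]
    rw [integral_rpow_mul_add_sq_rpow_neg_eq hR.le hε]
    linear_combination (-1 / (n - 2)) * hbdry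
  rw [hrescale, abs_mul, abs_of_pos (by positivity)]
  calc _ ≤ ε ^ ((2 - n) / 2) * (R / √ε) ^ (-n) := by gcongr
    _ = R ^ (-n) * ε := by rw [hTpow]; ring_nf; rw [rpow_one]

theorem intervalIntegrable_of_abs_le_rpow {q : ℝ → ℝ} {a c R : ℝ} (ha : -1 < a) (hR : 0 ≤ R)
    (hq : ContinuousOn q (Ioc 0 R)) (hqb : ∀ r ∈ Ioc 0 R, |q r| ≤ c * r ^ a) :
    IntervalIntegrable q volume 0 R := by
  refine (intervalIntegrable_iff_integrableOn_Ioc_of_le hR).2 <| Integrable.mono' ?_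
    (hq.aestronglyMeasurable measurableSet_Ioc)
    ((ae_restrict_iff' measurableSet_Ioc).2 (ae_of_all _ hqb))
  exact ((intervalIntegral.intervalIntegrable_rpow' ha).const_mul c).1

theorem abs_mul_rpow_le {u r M y z : ℝ} {k : ℕ} (hr : 0 < r) (hz : z = y + k)
    (hu : |u| ≤ M * r ^ k) : |u * r ^ y| ≤ M * r ^ z := by
  rw [abs_mul, abs_of_pos (rpow_pos_of_pos hr y), hz, rpow_add_natCast hr.ne', mul_comm (r ^ y),
    ← mul_assoc]
  exact mul_le_mul_of_nonneg_right hu (by positivity)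

theorem abs_integral_le_of_abs_le_rpow_of_neg_one_lt {q : ℝ → ℝ} {a c σ : ℝ} (ha : -1 < a)
    (hσ : 0 ≤ σ) (hq : ∀ r ∈ Ioc 0 σ, |q r| ≤ c * r ^ a) :
    |∫ r in (0:ℝ)..σ, q r| ≤ c * (σ ^ (a + 1) / (a + 1)) := by
  refine (intervalIntegral.norm_integral_le_of_norm_le (f := q) hσ (ae_of_all _ hq)
    ((intervalIntegral.intervalIntegrable_rpow' ha).const_mul c)).trans_eq ?_
  rw [intervalIntegral.integral_const_mul, integral_rpow (Or.inl ha),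
    zero_rpow (by linarith), sub_zero]

theorem abs_integral_le_of_abs_le_rpow_of_lt_neg_one {q : ℝ → ℝ} {a c σ R : ℝ} (ha : a < -1)
    (hσ : 0 < σ) (hσR : σ ≤ R) (hc : 0 ≤ c) (hq : ∀ r ∈ Ioc σ R, |q r| ≤ c * r ^ a) :
    |∫ r in σ..R, q r| ≤ c * (σ ^ (a + 1) / -(a + 1)) := by
  have hnot0 : (0:ℝ) ∉ uIcc σ R := by rw [uIcc_of_le hσR]; exact fun h => hσ.not_ge h.1
  refine (intervalIntegral.norm_integral_le_of_norm_le (f := q) hσR (ae_of_all _ hq)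
    ((intervalIntegral.intervalIntegrable_rpow (Or.inr hnot0)).const_mul c)).trans ?_
  rw [intervalIntegral.integral_const_mul, integral_rpow (Or.inr ⟨by linarith, hnot0⟩), div_neg,
    ← neg_div]
  have : 0 ≤ R ^ (a + 1) := (rpow_pos_of_pos (hσ.trans_le hσR) _).le
  exact mul_le_mul_of_nonneg_left (div_le_div_of_nonpos_of_le (by linarith) (by linarith)) hc

theorem abs_integral_le_of_abs_le_min_rpow {n R ε c : ℝ} (hn2 : 2 < n) (hn4 : n < 4)
    (hε : 0 < ε) (hεR : √ε ≤ R) {q : ℝ → ℝ} (hq : IntervalIntegrable q volume 0 R)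
    (hqb : ∀ r ∈ Ioc 0 R, |q r| ≤ c * min (r ^ (3 - n)) (ε * r ^ (1 - n))) :
    |∫ r in (0:ℝ)..R, q r| ≤ c * (1 / (4 - n) + 1 / (n - 2)) * ε ^ ((4 - n) / 2) := by
  have hσ : 0 < √ε := sqrt_pos.2 hε
  have hR : 0 < R := hσ.trans_le hεR
  have hc : 0 ≤ c := nonneg_of_mul_nonneg_left ((abs_nonneg _).trans (hqb R ⟨hR, le_rfl⟩))
    (lt_min (by positivity) (by positivity))
  have hnear := abs_integral_le_of_abs_le_rpow_of_neg_one_lt (q := q) (by linarith : -1 < 3 - n)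
    hσ.le fun r hr => (hqb r ⟨hr.1, hr.2.trans hεR⟩).trans
      (mul_le_mul_of_nonneg_left (min_le_left _ _) hc)
  have hfar := abs_integral_le_of_abs_le_rpow_of_lt_neg_one (q := q) (by linarith : 1 - n < -1)
    hσ hεR (mul_nonneg hc hε.le) fun r hr => (hqb r ⟨hσ.trans hr.1, hr.2⟩).trans
      ((mul_le_mul_of_nonneg_left (min_le_right _ _) hc).trans_eq (mul_assoc _ _ _).symm)
  rw [← intervalIntegral.integral_add_adjacent_intervals (hq.mono_set ?_) (hq.mono_set ?_)]
  · refine (abs_add_le _ _).trans ((add_le_add hnear hfar).trans_eq ?_)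
    rw [show 3 - n + 1 = 4 - n by ring, show -(1 - n + 1) = n - 2 by ring,
      show 1 - n + 1 = 2 - n by ring,
      ← rpow_div_two_eq_sqrt _ hε.le, ← rpow_div_two_eq_sqrt _ hε.le,
      show (4 - n) / 2 = 1 + (2 - n) / 2 by ring, rpow_add hε, rpow_one]
    ring
  · rw [uIcc_of_le hσ.le, uIcc_of_le hR.le]
    exact Icc_subset_Icc le_rfl hεR
  · rw [uIcc_of_le hεR, uIcc_of_le hR.le]
    exact Icc_subset_Icc hσ.le le_rfl

theorem integral_eq_of_hasDerivAt_of_abs_le_rpow {F F' : ℝ → ℝ} {R a c : ℝ} (hR : 0 < R)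
    (ha : 0 < a) (hderiv : ∀ r ∈ Ioo 0 R, HasDerivAt F (F' r) r)
    (hint : IntervalIntegrable F' volume 0 R) (hF : ContinuousOn F (Ioc 0 R))
    (hF0 : ∀ r ∈ Ioo 0 R, |F r| ≤ c * r ^ a) :
    ∫ r in (0:ℝ)..R, F' r = F R := by
  have hlim : Tendsto F (𝓝[>] 0) (𝓝 0) := by
    have hpow : Tendsto (fun r : ℝ => c * r ^ a) (𝓝[>] 0) (𝓝 0) := by
      simpa [zero_rpow ha.ne'] using
        ((continuousAt_rpow_const 0 a (Or.inr ha.le)).tendsto.mono_left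
          nhdsWithin_le_nhds).const_mul c
    refine squeeze_zero_norm' ?_ hpow
    filter_upwards [Ioo_mem_nhdsGT hR] with r hr using hF0 r hr
  have hlimR : Tendsto F (𝓝[<] R) (𝓝 (F R)) := (hF R ⟨hR, le_rfl⟩).tendsto.mono_left
    (nhdsWithin_le_of_mem (mem_of_superset (Ioo_mem_nhdsLT hR) Ioo_subset_Ioc_self))
  rw [intervalIntegral.integral_eq_sub_of_hasDerivAt_of_tendsto hR hderiv hint hlim hlimR,
    sub_zero]

theorem abs_sub_le_mul_pow_of_hasDerivWithinAt {f f' : ℝ → ℝ} {R K : ℝ} {k : ℕ} (hK : 0 ≤ K)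
    (hf : ∀ x ∈ Icc 0 R, HasDerivWithinAt f (f' x) (Icc 0 R) x)
    (hf' : ∀ x ∈ Icc 0 R, |f' x| ≤ K * x ^ k) {r : ℝ} (hr : r ∈ Icc 0 R) :
    |f r - f 0| ≤ K * r ^ (k + 1) := by
  have hsub : Icc 0 r ⊆ Icc 0 R := Icc_subset_Icc le_rfl hr.2
  have h := (convex_Icc 0 r).norm_image_sub_le_of_norm_hasDerivWithin_le (C := K * r ^ k)
    (fun x hx => (hf x (hsub hx)).mono hsub)
    (fun x hx => (hf' x (hsub hx)).trans (by gcongr; exacts [hx.1, hx.2]))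
    (left_mem_Icc.2 hr.1) (right_mem_Icc.2 hr.1)
  rw [norm_eq_abs, norm_eq_abs, sub_zero, abs_of_nonneg hr.1] at h
  rwa [pow_succ, ← mul_assoc]

theorem exists_abs_le_of_contDiffOn_two {φ : ℝ → ℝ} {R : ℝ} (hR : 0 < R)
    (hφ : ContDiffOn ℝ 2 φ (Icc 0 R)) (hφ0 : φ 0 = 1) (hφ'0 : derivWithin φ (Icc 0 R) 0 = 0) :
    ∃ M ≥ 0, ∀ r ∈ Icc 0 R, |derivWithin φ (Icc 0 R) r| ≤ M * r ∧
      |φ r * derivWithin φ (Icc 0 R) r| ≤ M * r ∧ |φ r ^ 2 - 1| ≤ M * r ^ 2 := by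
  have hU : UniqueDiffOn ℝ (Icc 0 R) := uniqueDiffOn_Icc hR
  have hφ' : ContDiffOn ℝ 1 (derivWithin φ (Icc 0 R)) (Icc 0 R) := hφ.derivWithin hU (by norm_num)
  obtain ⟨C0, hC0⟩ := isCompact_Icc.exists_bound_of_continuousOn hφ.continuousOn
  obtain ⟨C2, hC2⟩ :=
    isCompact_Icc.exists_bound_of_continuousOn (hφ'.continuousOn_derivWithin hU le_rfl)
  have h0 : (0:ℝ) ∈ Icc 0 R := left_mem_Icc.2 hR.le
  have hC0' : 0 ≤ C0 := (norm_nonneg _).trans (hC0 0 h0)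
  have hC2' : 0 ≤ C2 := (norm_nonneg _).trans (hC2 0 h0)
  have hψ : ∀ r ∈ Icc 0 R, |derivWithin φ (Icc 0 R) r| ≤ C2 * r := fun r hr => by
    simpa [hφ'0] using abs_sub_le_mul_pow_of_hasDerivWithinAt (k := 0) hC2'
      (fun x hx => ((hφ'.differentiableOn one_ne_zero) x hx).hasDerivWithinAt)
      (fun x hx => by simpa using hC2 x hx) hr
  have hφ1 : ∀ r ∈ Icc 0 R, |φ r - 1| ≤ C2 * r ^ 2 := fun r hr => hφ0 ▸
    abs_sub_le_mul_pow_of_hasDerivWithinAt (k := 1) hC2'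
      (fun x hx => ((hφ.differentiableOn two_ne_zero) x hx).hasDerivWithinAt)
      (fun x hx => by simpa using hψ x hx) hr
  refine ⟨(C0 + 1) * C2, by positivity, fun r hr => ⟨?_, ?_, ?_⟩⟩
  · exact (hψ r hr).trans (by gcongr; exacts [hr.1, le_mul_of_one_le_left hC2' (by linarith)])
  · rw [abs_mul, mul_assoc]
    exact mul_le_mul (norm_eq_abs (φ r) ▸ hC0 r hr |>.trans (by linarith)) (hψ r hr)
      (abs_nonneg _) (by positivity)
  · have hφ2 : |φ r + 1| ≤ C0 + 1 :=
      (abs_add_le _ _).trans (by rw [abs_one]; linarith [norm_eq_abs (φ r) ▸ hC0 r hr])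
    rw [show φ r ^ 2 - 1 = (φ r + 1) * (φ r - 1) by ring, abs_mul, mul_assoc]
    exact mul_le_mul hφ2 (hφ1 r hr) (abs_nonneg _) (by positivity)

/-- With `a = φ r` and `b = φ' r`: the error made in `v_ε'(r)² r^{n-1}` by replacing
`(ε + r²)^{-p}` with `r^{-2p}` in all terms but `(n-2)² r^{n+1} (ε + r²)^{-n}`. -/
noncomputable def gradientRemainder (n ε a b r : ℝ) : ℝ :=
  b ^ 2 * r ^ (n - 1) * ((ε + r ^ 2) ^ (-(n - 2)) - r ^ (-2 * (n - 2)))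
    + -2 * (n - 2) * (a * b) * r ^ n * ((ε + r ^ 2) ^ (-(n - 1)) - r ^ (-2 * (n - 1)))
    + (n - 2) ^ 2 * (a ^ 2 - 1) * r ^ (n + 1) * ((ε + r ^ 2) ^ (-n) - r ^ (-2 * n))

theorem hasDerivWithinAt_mul_add_sq_rpow {φ : ℝ → ℝ} {φ' n ε r : ℝ} {s : Set ℝ} (hε : 0 < ε)
    (hφ : HasDerivWithinAt φ φ' s r) :
    HasDerivWithinAt (fun t => φ t * (ε + t ^ 2) ^ (-(n - 2) / 2))
      (φ' * (ε + r ^ 2) ^ (-(n - 2) / 2) - (n - 2) * r * φ r * (ε + r ^ 2) ^ (-n / 2)) s r := by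
  have hX : 0 < ε + r ^ 2 := by positivity
  have h := hφ.mul ((((hasDerivAt_pow 2 r).const_add ε).hasDerivWithinAt (s := s)).rpow_const
    (p := -(n - 2) / 2) (Or.inl hX.ne'))
  refine h.congr_deriv ?_
  rw [show -(n - 2) / 2 - 1 = -n / 2 by ring]
  push_cast
  ring

theorem sq_mul_rpow_eq_add_gradientRemainder {n ε a b r : ℝ} (hε : 0 < ε) (hr : 0 < r) :
    (b * (ε + r ^ 2) ^ (-(n - 2) / 2) - (n - 2) * r * a * (ε + r ^ 2) ^ (-n / 2)) ^ 2
        * r ^ (n - 1)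
      = b ^ 2 * r ^ (3 - n)
        + (-2 * (n - 2) * (a * b) * r ^ (2 - n) + (n - 2) ^ 2 * (a ^ 2 - 1) * r ^ (1 - n))
        + (n - 2) ^ 2 * (r ^ (n + 1) * (ε + r ^ 2) ^ (-n))
        + gradientRemainder n ε a b r := by
  have hX : 0 < ε + r ^ 2 := by positivity
  have hX1 : ((ε + r ^ 2) ^ (-(n - 2) / 2)) ^ 2 = (ε + r ^ 2) ^ (-(n - 2)) := by
    rw [← rpow_natCast, ← rpow_mul hX.le]; ring_nf
  have hX2 : (ε + r ^ 2) ^ (-(n - 2) / 2) * (ε + r ^ 2) ^ (-n / 2) = (ε + r ^ 2) ^ (-(n - 1)) := by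
    rw [← rpow_add hX]; ring_nf
  have hX3 : ((ε + r ^ 2) ^ (-n / 2)) ^ 2 = (ε + r ^ 2) ^ (-n) := by
    rw [← rpow_natCast, ← rpow_mul hX.le]; ring_nf
  have hr1 : r ^ (n - 1) * r ^ (-2 * (n - 2)) = r ^ (3 - n) := by rw [← rpow_add hr]; ring_nf
  have hr2 : r ^ n * r ^ (-2 * (n - 1)) = r ^ (2 - n) := by rw [← rpow_add hr]; ring_nf
  have hr3 : r ^ (n + 1) * r ^ (-2 * n) = r ^ (1 - n) := by rw [← rpow_add hr]; ring_nf
  have hr4 : r * r ^ (n - 1) = r ^ n := by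
    rw [mul_comm, ← rpow_add_one hr.ne']; ring_nf
  have hr5 : r ^ 2 * r ^ (n - 1) = r ^ (n + 1) := by
    rw [mul_comm, ← rpow_add_natCast hr.ne']; ring_nf
  rw [gradientRemainder, ← hr1, ← hr2, ← hr3, ← hr4, ← hr5, ← hX1, ← hX2, ← hX3]
  ring

theorem abs_gradientRemainder_le {n ε a b r R M : ℝ} (hn : 2 < n) (hε : 0 ≤ ε) (hr : 0 < r)
    (hrR : r ≤ R) (hb : |b| ≤ M * r) (hab : |a * b| ≤ M * r) (ha : |a ^ 2 - 1| ≤ M * r ^ 2) :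
    |gradientRemainder n ε a b r|
      ≤ n * (M ^ 2 * R ^ 2 + 2 * (n - 2) * M + (n - 2) ^ 2 * M)
        * min (r ^ (3 - n)) (ε * r ^ (1 - n)) := by
  set W := min (r ^ (3 - n)) (ε * r ^ (1 - n))
  have hterm : ∀ u p m K, ∀ k : ℕ, 0 ≤ p → p ≤ n → m + k = 3 - n + 2 * p → |u| ≤ K * r ^ k →
      |u * r ^ m * ((ε + r ^ 2) ^ (-p) - r ^ (-2 * p))| ≤ K * (n * W) := by
    intro u p m K k hp hpn hm hu
    have hK : 0 ≤ K := nonneg_of_mul_nonneg_left ((abs_nonneg u).trans hu) (by positivity)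
    have hgap := rpow_add_mul_abs_add_sq_rpow_neg_sub_le hr hε hp (3 - n)
    rw [show 3 - n - 2 = 1 - n by ring] at hgap
    calc _ = |u * r ^ m| * |(ε + r ^ 2) ^ (-p) - r ^ (-2 * p)| := abs_mul _ _
      _ ≤ K * r ^ (3 - n + 2 * p) * |(ε + r ^ 2) ^ (-p) - r ^ (-2 * p)| := by
          gcongr
          exact abs_mul_rpow_le hr hm.symm hu
      _ ≤ K * (n * W) := by
          rw [mul_assoc]
          refine mul_le_mul_of_nonneg_left (hgap.trans ?_) hK
          gcongr
          exact max_le (by linarith) hpn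
  have hM : 0 ≤ M := nonneg_of_mul_nonneg_left ((abs_nonneg b).trans hb) hr
  have t1 := hterm (b ^ 2) (n - 2) (n - 1) (M ^ 2 * R ^ 2) 0 (by linarith) (by linarith)
    (by push_cast; ring) (by
      rw [abs_pow, pow_zero, mul_one, ← mul_pow]
      exact pow_le_pow_left₀ (abs_nonneg b) (hb.trans (by gcongr)) 2)
  have t2 := hterm (-2 * (n - 2) * (a * b)) (n - 1) n (2 * (n - 2) * M) 1 (by linarith)
    (by linarith) (by push_cast; ring) (by
      rw [show -2 * (n - 2) = -(2 * (n - 2)) by ring, abs_mul, abs_neg,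
        abs_of_nonneg (by linarith : 0 ≤ 2 * (n - 2)), pow_one]
      exact (mul_le_mul_of_nonneg_left hab (by linarith)).trans_eq (by ring))
  have t3 := hterm ((n - 2) ^ 2 * (a ^ 2 - 1)) n (n + 1) ((n - 2) ^ 2 * M) 2 (by linarith) le_rfl
    (by push_cast; ring) (by
      rw [abs_mul, abs_of_nonneg (sq_nonneg _), mul_assoc]
      exact mul_le_mul_of_nonneg_left ha (sq_nonneg _))
  rw [gradientRemainder]
  exact (abs_add_three _ _ _).trans ((add_le_add (add_le_add t1 t2) t3).trans_eq (by ring))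

theorem intervalIntegrable_gradientRemainder {n R ε M : ℝ} {φ ψ : ℝ → ℝ} (hn2 : 2 < n)
    (hn4 : n < 4) (hR : 0 ≤ R) (hε : 0 < ε) (hφ : ContinuousOn φ (Icc 0 R))
    (hψ : ContinuousOn ψ (Icc 0 R)) (hM0 : 0 ≤ M)
    (hM : ∀ r ∈ Icc 0 R, |ψ r| ≤ M * r ∧ |φ r * ψ r| ≤ M * r ∧ |φ r ^ 2 - 1| ≤ M * r ^ 2) :
    IntervalIntegrable (fun r => gradientRemainder n ε (φ r) (ψ r) r) volume 0 R := by
  have hφ' := hφ.mono Ioc_subset_Icc_self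
  have hψ' := hψ.mono Ioc_subset_Icc_self
  refine intervalIntegrable_of_abs_le_rpow (a := 3 - n) (by linarith) hR ?_ fun r hr =>
    (abs_gradientRemainder_le hn2 hε.le hr.1 hr.2 (hM r (Ioc_subset_Icc_self hr)).1
      (hM r (Ioc_subset_Icc_self hr)).2.1 (hM r (Ioc_subset_Icc_self hr)).2.2).trans
      (mul_le_mul_of_nonneg_left (min_le_left _ _) (by positivity))
  simp only [gradientRemainder]
  fun_prop (disch := intro x hx; left; first | exact hx.1.ne' | positivity)

theorem intervalIntegrable_deriv_sq_sub_one_mul_rpow {n R M : ℝ} {φ ψ : ℝ → ℝ} (hn2 : 2 < n)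
    (hn4 : n < 4) (hR : 0 ≤ R) (hφ : ContinuousOn φ (Icc 0 R)) (hψ : ContinuousOn ψ (Icc 0 R))
    (hM : ∀ r ∈ Icc 0 R, |φ r * ψ r| ≤ M * r ∧ |φ r ^ 2 - 1| ≤ M * r ^ 2) :
    IntervalIntegrable (fun r => -2 * (n - 2) * (φ r * ψ r) * r ^ (2 - n)
      + (n - 2) ^ 2 * (φ r ^ 2 - 1) * r ^ (1 - n)) volume 0 R := by
  have hφ' := hφ.mono Ioc_subset_Icc_self
  have hψ' := hψ.mono Ioc_subset_Icc_self
  refine intervalIntegrable_of_abs_le_rpow (a := 3 - n) (c := 2 * (n - 2) * M + (n - 2) ^ 2 * M)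
    (by linarith) hR (by fun_prop (disch := intro x hx; exact Or.inl hx.1.ne')) ?_
  intro r hr
  obtain ⟨hab, ha⟩ := hM r (Ioc_subset_Icc_self hr)
  refine (abs_add_le _ _).trans (add_mul _ _ (r ^ (3 - n)) ▸ add_le_add ?_ ?_)
  · refine abs_mul_rpow_le (k := 1) hr.1 (by push_cast; ring) ?_
    rw [abs_mul, abs_of_nonpos (by linarith), pow_one]
    exact (mul_le_mul_of_nonneg_left hab (by linarith)).trans_eq (by ring)
  · refine abs_mul_rpow_le (k := 2) hr.1 (by push_cast; ring) ?_
    rw [abs_mul, abs_of_nonneg (sq_nonneg _), mul_assoc]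
    exact mul_le_mul_of_nonneg_left ha (sq_nonneg _)

theorem integral_deriv_sq_sub_one_mul_rpow_eq {n R M : ℝ} {φ ψ : ℝ → ℝ} (hn2 : 2 < n) (hn4 : n < 4)
    (hR : 0 < R) (hφ : ∀ r ∈ Icc 0 R, HasDerivWithinAt φ (ψ r) (Icc 0 R) r)
    (hψ : ContinuousOn ψ (Icc 0 R))
    (hM : ∀ r ∈ Icc 0 R, |φ r * ψ r| ≤ M * r ∧ |φ r ^ 2 - 1| ≤ M * r ^ 2) (hφR : φ R = 0) :
    ∫ r in (0:ℝ)..R, (-2 * (n - 2) * (φ r * ψ r) * r ^ (2 - n)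
      + (n - 2) ^ 2 * (φ r ^ 2 - 1) * r ^ (1 - n)) = (n - 2) * R ^ (2 - n) := by
  have hφc : ContinuousOn φ (Icc 0 R) := fun r hr => (hφ r hr).continuousWithinAt
  have hφ' := hφc.mono Ioc_subset_Icc_self
  rw [integral_eq_of_hasDerivAt_of_abs_le_rpow
    (F := fun r => -(n - 2) * (φ r ^ 2 - 1) * r ^ (2 - n))
    (a := 4 - n) (c := (n - 2) * M) hR (by linarith) ?_
    (intervalIntegrable_deriv_sq_sub_one_mul_rpow hn2 hn4 hR.le hφc hψ hM)
    (by fun_prop (disch := intro x hx; exact Or.inl hx.1.ne')) ?_, hφR]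
  · ring
  · intro r hr
    have hd : HasDerivAt φ (ψ r) r :=
      (hφ r (Ioo_subset_Icc_self hr)).hasDerivAt (Icc_mem_nhds hr.1 hr.2)
    refine (((hd.pow 2).sub_const 1).const_mul (-(n - 2))).mul
      (hasDerivAt_rpow_const (Or.inl hr.1.ne')) |>.congr_deriv ?_
    rw [show 2 - n - 1 = 1 - n by ring, Pi.pow_apply]
    push_cast
    ring
  · intro r hr
    refine abs_mul_rpow_le (k := 2) hr.1 (by push_cast; ring) ?_
    rw [abs_mul, abs_neg, abs_of_nonneg (by linarith), mul_assoc]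
    exact mul_le_mul_of_nonneg_left (hM r (Ioo_subset_Icc_self hr)).2 (by linarith)

theorem integral_sq_deriv_mul_rpow_eq {n R ε M : ℝ} {φ ψ : ℝ → ℝ} (hn2 : 2 < n) (hn4 : n < 4)
    (hR : 0 < R) (hε : 0 < ε) (hφ : ∀ r ∈ Icc 0 R, HasDerivWithinAt φ (ψ r) (Icc 0 R) r)
    (hψ : ContinuousOn ψ (Icc 0 R)) (hM0 : 0 ≤ M)
    (hM : ∀ r ∈ Icc 0 R, |ψ r| ≤ M * r ∧ |φ r * ψ r| ≤ M * r ∧ |φ r ^ 2 - 1| ≤ M * r ^ 2)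
    (hφR : φ R = 0) :
    ∫ r in (0:ℝ)..R,
        (derivWithin (fun s => φ s * (ε + s ^ 2) ^ (-(n - 2) / 2)) (Icc 0 R) r) ^ 2 * r ^ (n - 1)
      = (∫ r in (0:ℝ)..R, ψ r ^ 2 * r ^ (3 - n)) + (n - 2) * R ^ (2 - n)
        + (n - 2) ^ 2 * (∫ r in (0:ℝ)..R, r ^ (n + 1) * (ε + r ^ 2) ^ (-n))
        + ∫ r in (0:ℝ)..R, gradientRemainder n ε (φ r) (ψ r) r := by
  have hφc : ContinuousOn φ (Icc 0 R) := fun r hr => (hφ r hr).continuousWithinAt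
  have hφ' := hφc.mono Ioc_subset_Icc_self
  have hψ' := hψ.mono Ioc_subset_Icc_self
  have hexpand : ∀ r ∈ Ioc 0 R,
      (derivWithin (fun s => φ s * (ε + s ^ 2) ^ (-(n - 2) / 2)) (Icc 0 R) r) ^ 2 * r ^ (n - 1)
        = ψ r ^ 2 * r ^ (3 - n)
          + (-2 * (n - 2) * (φ r * ψ r) * r ^ (2 - n) + (n - 2) ^ 2 * (φ r ^ 2 - 1) * r ^ (1 - n))
          + (n - 2) ^ 2 * (r ^ (n + 1) * (ε + r ^ 2) ^ (-n))
          + gradientRemainder n ε (φ r) (ψ r) r := fun r hr => by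
    rw [(hasDerivWithinAt_mul_add_sq_rpow hε (hφ r (Ioc_subset_Icc_self hr))).derivWithin
      (uniqueDiffOn_Icc hR r (Ioc_subset_Icc_self hr)),
      sq_mul_rpow_eq_add_gradientRemainder hε hr.1]
  have hint₁ : IntervalIntegrable (fun r => ψ r ^ 2 * r ^ (3 - n)) volume 0 R :=
    intervalIntegrable_of_abs_le_rpow (a := 3 - n) (c := M ^ 2 * R ^ 2) (by linarith) hR.le
      (by fun_prop (disch := intro x hx; exact Or.inl hx.1.ne')) fun r hr =>
        abs_mul_rpow_le (k := 0) hr.1 (by simp) (by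
          rw [pow_zero, mul_one, abs_pow, ← mul_pow]
          exact pow_le_pow_left₀ (abs_nonneg _) ((hM r (Ioc_subset_Icc_self hr)).1.trans
            (mul_le_mul_of_nonneg_left hr.2 hM0)) 2)
  have hint₂ :=
    intervalIntegrable_deriv_sq_sub_one_mul_rpow hn2 hn4 hR.le hφc hψ fun r hr => (hM r hr).2
  have hint₃ : IntervalIntegrable (fun r => r ^ (n + 1) * (ε + r ^ 2) ^ (-n)) volume 0 R :=
    ContinuousOn.intervalIntegrable (by
      fun_prop (disch := intro x _; first | exact Or.inr (by linarith) | left; positivity))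
  have hint₄ := intervalIntegrable_gradientRemainder hn2 hn4 hR.le hε hφc hψ hM0 hM
  rw [intervalIntegral.integral_congr_ae
      (ae_of_all _ fun r hr => hexpand r (uIoc_of_le hR.le ▸ hr)),
    intervalIntegral.integral_add (hint₁.add hint₂ |>.add (hint₃.const_mul _)) hint₄,
    intervalIntegral.integral_add (hint₁.add hint₂) (hint₃.const_mul _),
    intervalIntegral.integral_add hint₁ hint₂, intervalIntegral.integral_const_mul,
    integral_deriv_sq_sub_one_mul_rpow_eq hn2 hn4 hR hφ hψ (fun r hr => (hM r hr).2) hφR]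

theorem self_le_rpow_mul_rpow_of_sqrt_le {n R ε : ℝ} (hn : 2 ≤ n) (hε : 0 < ε) (hεR : √ε ≤ R) :
    ε ≤ R ^ (n - 2) * ε ^ ((4 - n) / 2) :=
  calc ε = ε ^ ((n - 2) / 2) * ε ^ ((4 - n) / 2) := by
        rw [← rpow_add hε, show (n - 2) / 2 + (4 - n) / 2 = 1 by ring, rpow_one]
    _ ≤ R ^ (n - 2) * ε ^ ((4 - n) / 2) := by
        rw [rpow_div_two_eq_sqrt _ hε.le]
        exact mul_le_mul_of_nonneg_right (rpow_le_rpow (sqrt_nonneg _) hεR (by linarith))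
          (rpow_nonneg hε.le _)

theorem abs_integral_sq_deriv_mul_rpow_sub_le {n R ε M : ℝ} {φ ψ : ℝ → ℝ} (hn2 : 2 < n)
    (hn4 : n < 4) (hε : 0 < ε) (hεR : √ε ≤ R)
    (hφ : ∀ r ∈ Icc 0 R, HasDerivWithinAt φ (ψ r) (Icc 0 R) r) (hψ : ContinuousOn ψ (Icc 0 R))
    (hM0 : 0 ≤ M)
    (hM : ∀ r ∈ Icc 0 R, |ψ r| ≤ M * r ∧ |φ r * ψ r| ≤ M * r ∧ |φ r ^ 2 - 1| ≤ M * r ^ 2)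
    (hφR : φ R = 0) :
    |(∫ r in (0:ℝ)..R,
          (derivWithin (fun s => φ s * (ε + s ^ 2) ^ (-(n - 2) / 2)) (Icc 0 R) r) ^ 2
            * r ^ (n - 1))
        - (∫ r in (0:ℝ)..R, ψ r ^ 2 * r ^ (3 - n))
        - n * (n - 2) * Gamma (n / 2) ^ 2 / (2 * Gamma n) * ε ^ ((2 - n) / 2)|
      ≤ n * (M ^ 2 * R ^ 2 + 2 * (n - 2) * M + (n - 2) ^ 2 * M) * (1 / (4 - n) + 1 / (n - 2))
          * ε ^ ((4 - n) / 2) + (n - 2) ^ 2 * (R ^ (-n) * ε) := by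
  have hR : 0 < R := (sqrt_pos.2 hε).trans_le hεR
  have hφc : ContinuousOn φ (Icc 0 R) := fun r hr => (hφ r hr).continuousWithinAt
  have hE := abs_integral_le_of_abs_le_min_rpow hn2 hn4 hε hεR
    (intervalIntegrable_gradientRemainder hn2 hn4 hR.le hε hφc hψ hM0 hM) fun r hr =>
      abs_gradientRemainder_le hn2 hε.le hr.1 hr.2 (hM r (Ioc_subset_Icc_self hr)).1
        (hM r (Ioc_subset_Icc_self hr)).2.1 (hM r (Ioc_subset_Icc_self hr)).2.2
  have hA := abs_integral_rpow_mul_add_sq_rpow_neg_sub_le hn2 hR hε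
  have hn2' : n - 2 ≠ 0 := by linarith
  rw [integral_sq_deriv_mul_rpow_eq hn2 hn4 hR hε hφ hψ hM0 hM hφR]
  calc _ = |(∫ r in (0:ℝ)..R, gradientRemainder n ε (φ r) (ψ r) r)
        + (n - 2) ^ 2 * ((∫ r in (0:ℝ)..R, r ^ (n + 1) * (ε + r ^ 2) ^ (-n))
          - n / (n - 2) * (Gamma (n / 2) ^ 2 / (2 * Gamma n)) * ε ^ ((2 - n) / 2)
          + R ^ (2 - n) / (n - 2))| := by
        congr 1
        field_simp
        ring
    _ ≤ _ := by
        refine (abs_add_le _ _).trans (add_le_add hE ?_)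
        rw [abs_mul, abs_of_nonneg (sq_nonneg _)]
        gcongr

/-- Claim 3.2: asymptotics, as `ε → 0⁺`, of the gradient term
`∫_0^R v_ε'(r)² r^{n-1} dr` for the instanton-type test function
`v_ε(r) = φ(r)(ε+r²)^{-(n-2)/2}`. -/
theorem gradient_term_asymptotics (n R : ℝ) (hn2 : 2 < n) (hn4 : n < 4)
    (hR : 0 < R)
    (φ : ℝ → ℝ) (hφ : ContDiffOn ℝ 2 φ (Icc 0 R))
    (hφ0 : φ 0 = 1) (hφ'0 : derivWithin φ (Icc 0 R) 0 = 0) (hφR : φ R = 0) :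
    ∃ C > (0:ℝ), ∃ ε0 > (0:ℝ), ∀ ε ∈ Ioo (0:ℝ) ε0,
      |(∫ r in (0:ℝ)..R,
          (derivWithin (fun s : ℝ => φ s * (ε + s ^ 2) ^ (-(n - 2) / 2))
            (Icc 0 R) r) ^ 2 * r ^ (n - 1))
        - (∫ r in (0:ℝ)..R, (derivWithin φ (Icc 0 R) r) ^ 2 * r ^ (3 - n))
        - (n * (n - 2) * Real.Gamma (n / 2) ^ 2 / (2 * Real.Gamma n)) *
            ε ^ ((2 - n) / 2)|
      ≤ C * ε ^ ((4 - n) / 2) := by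
  obtain ⟨M, hM0, hM⟩ := exists_abs_le_of_contDiffOn_two hR hφ hφ0 hφ'0
  have hφ' : ∀ r ∈ Icc 0 R, HasDerivWithinAt φ (derivWithin φ (Icc 0 R) r) (Icc 0 R) r :=
    fun r hr => ((hφ.differentiableOn two_ne_zero) r hr).hasDerivWithinAt
  have hψ := hφ.continuousOn_derivWithin (uniqueDiffOn_Icc hR) one_le_two
  refine ⟨n * (M ^ 2 * R ^ 2 + 2 * (n - 2) * M + (n - 2) ^ 2 * M) * (1 / (4 - n) + 1 / (n - 2))
      + (n - 2) ^ 2 * (R ^ (-n) * R ^ (n - 2)), by positivity, R ^ 2, by positivity,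
    fun ε ⟨hε, hεR⟩ => ?_⟩
  have hσR : √ε ≤ R := (sqrt_le_sqrt hεR.le).trans_eq (sqrt_sq hR.le)
  have hε_le := self_le_rpow_mul_rpow_of_sqrt_le hn2.le hε hσR
  refine (abs_integral_sq_deriv_mul_rpow_sub_le hn2 hn4 hε hσR hφ' hψ hM0 hM hφR).trans ?_
  rw [add_mul, mul_assoc ((n - 2) ^ 2), mul_assoc (R ^ (-n))]
  gcongr
end

section
/- Let n be a real parameter with 2 < n < 4, let R > 0, and let φ : [0,R] → ℝ be twice continuously differentiable with φ ≥ 0, φ(0) = 1, φ'(0) = 0, and φ(R) = 0. Then there exist constants C > 0 and ε0 > 0 such that for all ε ∈ (0, ε0): | ∫_0^R φ(r)^{2n/(n−2)}·(ε+r²)^{−n}·r^{n−1} dr − (Γ(n/2)²/(2·Γ(n)))·ε^{−n/2} | ≤ C·ε^{(2−n)/2}. -/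
/-!
Against the radial weight `g_ε(r) = r^(n-1) (ε + r²)^(-n)`, the substitution `u = r²/(ε + r²)`
turns `∫₀^∞ r^(2a-1) (ε + r²)^(-(a+b)) dr` into `ε^(-b) B(a, b) / 2`. With `a = b = n/2` this
is the main term; with `a = n/2 + 1`, `b = n/2 - 1` it shows that the second moment
`∫₀^∞ r² g_ε` is a constant times `ε^((2-n)/2)`. Extending `φ^(2n/(n-2))` by zero beyond `R`,
its distance to `1` is `O(r²)` on all of `(0, ∞)`: near `0` because `φ(0) = 1`, `φ'(0) = 0`
and `t ↦ t^p` is Lipschitz on bounded sets, beyond `R` because `r/R > 1`. So the error is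
bounded by a multiple of the second moment.
-/

open Real Set MeasureTheory

theorem integral_Ioo_rpow_mul_one_sub_rpow {a b : ℝ} (ha : 0 < a) (hb : 0 < b) :
    ∫ u in Ioo (0:ℝ) 1, u ^ (a - 1) * (1 - u) ^ (b - 1) = Gamma a * Gamma b / Gamma (a + b) := by
  have hbeta : Complex.betaIntegral a b
      = ((∫ u in (0:ℝ)..1, u ^ (a - 1) * (1 - u) ^ (b - 1) : ℝ) : ℂ) := by
    rw [Complex.betaIntegral, ← intervalIntegral.integral_ofReal]
    refine intervalIntegral.integral_congr fun u hu => ?_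
    rw [uIcc_of_le zero_le_one] at hu
    simp only [Complex.ofReal_mul, Complex.ofReal_cpow hu.1,
      Complex.ofReal_cpow (sub_nonneg.2 hu.2)]
    push_cast
    rfl
  rw [Complex.betaIntegral_eq_Gamma_mul_div _ _ (by simpa) (by simpa), ← Complex.ofReal_add,
    Complex.Gamma_ofReal, Complex.Gamma_ofReal, Complex.Gamma_ofReal] at hbeta
  rw [← integral_Ioc_eq_integral_Ioo, ← intervalIntegral.integral_of_le zero_le_one]
  exact_mod_cast hbeta.symm

theorem hasDerivAt_sq_div_add_sq {ε : ℝ} (hε : 0 < ε) (r : ℝ) :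
    HasDerivAt (fun r : ℝ => r ^ 2 / (ε + r ^ 2)) (2 * ε * r / (ε + r ^ 2) ^ 2) r := by
  have hS : ε + r ^ 2 ≠ 0 := by positivity
  refine ((hasDerivAt_pow 2 r).fun_div ((hasDerivAt_pow 2 r).const_add ε) hS).congr_deriv ?_
  push_cast
  ring

theorem strictMonoOn_sq_div_add_sq {ε : ℝ} (hε : 0 < ε) :
    StrictMonoOn (fun r : ℝ => r ^ 2 / (ε + r ^ 2)) (Ici 0) := by
  intro r hr s _ hrs
  simp only [mem_Ici] at hr
  rw [div_lt_div_iff₀ (by positivity) (by positivity)]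
  nlinarith [mul_lt_mul_of_pos_left (mul_lt_mul'' hrs hrs hr hr) hε]

theorem image_Ioi_sq_div_add_sq {ε : ℝ} (hε : 0 < ε) :
    (fun r : ℝ => r ^ 2 / (ε + r ^ 2)) '' Ioi 0 = Ioo 0 1 := by
  ext u
  constructor
  · rintro ⟨r, hr, rfl⟩
    have hS : 0 < ε + r ^ 2 := by positivity
    exact ⟨by simp only [mem_Ioi] at hr; positivity, (div_lt_one hS).2 (by linarith)⟩
  · rintro ⟨hu0, hu1⟩
    have hq : 0 < ε * u / (1 - u) := div_pos (by positivity) (by linarith)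
    refine ⟨√(ε * u / (1 - u)), Real.sqrt_pos.2 hq, ?_⟩
    simp only [Real.sq_sqrt hq.le]
    field_simp
    ring

theorem abs_deriv_sq_div_add_sq_mul_rpow_mul_one_sub_rpow {a b ε r : ℝ} (hε : 0 < ε) (hr : 0 < r) :
    |2 * ε * r / (ε + r ^ 2) ^ 2| *
        ((r ^ 2 / (ε + r ^ 2)) ^ (a - 1) * (1 - r ^ 2 / (ε + r ^ 2)) ^ (b - 1))
      = 2 * ε ^ b * (r ^ (2 * a - 1) * (ε + r ^ 2) ^ (-(a + b))) := by
  have hS : 0 < ε + r ^ 2 := by positivity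
  have hsub : 1 - r ^ 2 / (ε + r ^ 2) = ε / (ε + r ^ 2) := by field_simp; ring
  have hr2 : (r ^ 2) ^ (a - 1) = r ^ (2 * a - 1) / r := by
    rw [← rpow_sub_one hr.ne', ← rpow_natCast, ← rpow_mul hr.le]
    congr 1
    push_cast
    ring
  rw [hsub, abs_of_pos (by positivity), div_rpow (by positivity) hS.le, div_rpow hε.le hS.le,
    hr2, rpow_sub_one hε.ne', rpow_sub_one hS.ne', rpow_sub_one hS.ne',
    show -(a + b) = -a + -b by ring, rpow_add hS, rpow_neg hS.le, rpow_neg hS.le]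
  field_simp

theorem integral_Ioi_rpow_mul_add_sq_rpow {a b ε : ℝ} (ha : 0 < a) (hb : 0 < b) (hε : 0 < ε) :
    ∫ r in Ioi (0:ℝ), r ^ (2 * a - 1) * (ε + r ^ 2) ^ (-(a + b))
      = Gamma a * Gamma b / (2 * Gamma (a + b)) * ε ^ (-b) := by
  have hcov := integral_image_eq_integral_abs_deriv_smul measurableSet_Ioi
    (fun r _ => (hasDerivAt_sq_div_add_sq hε r).hasDerivWithinAt)
    ((strictMonoOn_sq_div_add_sq hε).injOn.mono Ioi_subset_Ici_self)
    (fun u => u ^ (a - 1) * (1 - u) ^ (b - 1))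
  rw [image_Ioi_sq_div_add_sq hε, integral_Ioo_rpow_mul_one_sub_rpow ha hb,
    setIntegral_congr_fun measurableSet_Ioi fun r hr =>
      (smul_eq_mul _ _).trans (abs_deriv_sq_div_add_sq_mul_rpow_mul_one_sub_rpow hε hr),
    integral_const_mul] at hcov
  have hΓ := Gamma_pos_of_pos (add_pos ha hb)
  have hεb := rpow_pos_of_pos hε b
  rw [div_eq_iff hΓ.ne'] at hcov
  rw [rpow_neg hε.le]
  field_simp
  linear_combination -hcov

theorem integrableOn_Ioi_rpow_mul_add_sq_rpow {a b ε : ℝ} (ha : 0 < a) (hb : 0 < b)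
    (hε : 0 < ε) :
    IntegrableOn (fun r : ℝ => r ^ (2 * a - 1) * (ε + r ^ 2) ^ (-(a + b))) (Ioi 0) := by
  refine Integrable.of_integral_ne_zero ?_
  rw [integral_Ioi_rpow_mul_add_sq_rpow ha hb hε]
  exact (mul_pos (div_pos (mul_pos (Gamma_pos_of_pos ha) (Gamma_pos_of_pos hb))
    (mul_pos two_pos (Gamma_pos_of_pos (add_pos ha hb)))) (rpow_pos_of_pos hε _)).ne'

theorem integrableOn_Ioi_rpow_sub_one_mul_add_sq_rpow_neg {n ε : ℝ} (hn : 0 < n) (hε : 0 < ε) :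
    IntegrableOn (fun r : ℝ => r ^ (n - 1) * (ε + r ^ 2) ^ (-n)) (Ioi 0) := by
  have h := integrableOn_Ioi_rpow_mul_add_sq_rpow (half_pos hn) (half_pos hn) hε
  simp only [show 2 * (n / 2) - 1 = n - 1 by ring, add_halves] at h
  exact h

theorem integral_Ioi_rpow_sub_one_mul_add_sq_rpow_neg {n ε : ℝ} (hn : 0 < n) (hε : 0 < ε) :
    ∫ r in Ioi (0:ℝ), r ^ (n - 1) * (ε + r ^ 2) ^ (-n)
      = Gamma (n / 2) ^ 2 / (2 * Gamma n) * ε ^ (-n / 2) := by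
  have h := integral_Ioi_rpow_mul_add_sq_rpow (half_pos hn) (half_pos hn) hε
  simp only [show 2 * (n / 2) - 1 = n - 1 by ring, add_halves] at h
  rw [h, sq, neg_div]

theorem sq_mul_rpow_sub_one_mul_add_sq_rpow_neg {n ε r : ℝ} (hr : 0 < r) :
    r ^ 2 * (r ^ (n - 1) * (ε + r ^ 2) ^ (-n))
      = r ^ (2 * (n / 2 + 1) - 1) * (ε + r ^ 2) ^ (-(n / 2 + 1 + (n / 2 - 1))) := by
  rw [show 2 * (n / 2 + 1) - 1 = n - 1 + ((2 : ℕ) : ℝ) by push_cast; ring,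
    rpow_add_natCast hr.ne', show n / 2 + 1 + (n / 2 - 1) = n by ring]
  ring

theorem integrableOn_Ioi_sq_mul_rpow_sub_one_mul_add_sq_rpow_neg {n ε : ℝ} (hn : 2 < n)
    (hε : 0 < ε) :
    IntegrableOn (fun r : ℝ => r ^ 2 * (r ^ (n - 1) * (ε + r ^ 2) ^ (-n))) (Ioi 0) :=
  (integrableOn_Ioi_rpow_mul_add_sq_rpow (by linarith) (by linarith) hε).congr_fun
    (fun _ hr => (sq_mul_rpow_sub_one_mul_add_sq_rpow_neg hr).symm) measurableSet_Ioi

theorem integral_Ioi_sq_mul_rpow_sub_one_mul_add_sq_rpow_neg {n ε : ℝ} (hn : 2 < n)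
    (hε : 0 < ε) :
    ∫ r in Ioi (0:ℝ), r ^ 2 * (r ^ (n - 1) * (ε + r ^ 2) ^ (-n))
      = Gamma (n / 2 + 1) * Gamma (n / 2 - 1) / (2 * Gamma n) * ε ^ ((2 - n) / 2) := by
  rw [setIntegral_congr_fun measurableSet_Ioi fun _ hr => sq_mul_rpow_sub_one_mul_add_sq_rpow_neg hr,
    integral_Ioi_rpow_mul_add_sq_rpow (by linarith) (by linarith) hε,
    show n / 2 + 1 + (n / 2 - 1) = n by ring, show -(n / 2 - 1) = (2 - n) / 2 by ring]

theorem abs_integral_mul_sub_integral_le {α : Type*} [MeasurableSpace α] {μ : Measure α}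
    {g h w : α → ℝ} {A : ℝ} (hg : Integrable g μ) (hhg : Integrable (fun x => h x * g x) μ)
    (hwg : Integrable (fun x => w x * g x) μ) (hg0 : ∀ᵐ x ∂μ, 0 ≤ g x)
    (hh : ∀ᵐ x ∂μ, |h x - 1| ≤ A * w x) :
    |∫ x, h x * g x ∂μ - ∫ x, g x ∂μ| ≤ A * ∫ x, w x * g x ∂μ := by
  rw [← integral_sub hhg hg, ← integral_const_mul A, ← Real.norm_eq_abs]
  refine norm_integral_le_of_norm_le (hwg.const_mul A) ?_
  filter_upwards [hg0, hh] with x hgx hhx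
  calc ‖h x * g x - g x‖ = |h x - 1| * g x := by
        rw [Real.norm_eq_abs, ← sub_one_mul, abs_mul, abs_of_nonneg hgx]
    _ ≤ A * w x * g x := mul_le_mul_of_nonneg_right hhx hgx
    _ = A * (w x * g x) := mul_assoc _ _ _

theorem exists_abs_sub_le_mul_sq_of_derivWithin_eq_zero {f : ℝ → ℝ} {a b : ℝ} (hab : a < b)
    (hf : ContDiffOn ℝ 2 f (Icc a b)) (hf'a : derivWithin f (Icc a b) a = 0) :
    ∃ K, ∀ x ∈ Icc a b, |f x - f a| ≤ K * (x - a) ^ 2 := by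
  have hu := uniqueDiffOn_Icc hab
  set f' := derivWithin f (Icc a b)
  have hf' : ContDiffOn ℝ 1 f' (Icc a b) := hf.derivWithin hu (by norm_num)
  obtain ⟨K, hK⟩ :=
    isCompact_Icc.exists_bound_of_continuousOn (hf'.continuousOn_derivWithin hu le_rfl)
  have ha : a ∈ Icc a b := left_mem_Icc.2 hab.le
  have hK0 : 0 ≤ K := (norm_nonneg _).trans (hK a ha)
  have hf'_le : ∀ y ∈ Icc a b, |f' y| ≤ K * (y - a) := fun y hy => by
    simpa [hf'a, abs_of_nonneg (sub_nonneg.2 hy.1)] using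
      (convex_Icc a b).norm_image_sub_le_of_norm_derivWithin_le
        (hf'.differentiableOn one_ne_zero) hK ha hy
  refine ⟨K, fun x hx => ?_⟩
  have hsub : Icc a x ⊆ Icc a b := Icc_subset_Icc_right hx.2
  have hmvt := (convex_Icc a x).norm_image_sub_le_of_norm_hasDerivWithin_le (C := K * (x - a))
    (fun y hy => ((hf.differentiableOn two_ne_zero y (hsub hy)).hasDerivWithinAt).mono hsub)
    (fun y hy => (hf'_le y (hsub hy)).trans (by gcongr; exact hy.2))
    (left_mem_Icc.2 hx.1) (right_mem_Icc.2 hx.1)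
  rw [Real.norm_eq_abs, Real.norm_eq_abs, abs_of_nonneg (sub_nonneg.2 hx.1)] at hmvt
  linarith

theorem abs_rpow_sub_rpow_le {p B x y : ℝ} (hp : 1 ≤ p) (hx : x ∈ Icc 0 B) (hy : y ∈ Icc 0 B) :
    |x ^ p - y ^ p| ≤ p * B ^ (p - 1) * |x - y| := by
  refine (convex_Icc 0 B).norm_image_sub_le_of_norm_hasDerivWithin_le
    (fun z _ => (hasDerivAt_rpow_const (Or.inr hp)).hasDerivWithinAt) (fun z hz => ?_) hy hx
  rw [Real.norm_eq_abs, abs_of_nonneg (mul_nonneg (by linarith) (rpow_nonneg hz.1 _))]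
  exact mul_le_mul_of_nonneg_left (rpow_le_rpow hz.1 hz.2 (by linarith)) (by linarith)

theorem exists_abs_indicator_rpow_sub_one_le {φ : ℝ → ℝ} {R p : ℝ} (hR : 0 < R) (hp : 1 ≤ p)
    (hφ : ContDiffOn ℝ 2 φ (Icc 0 R)) (hφpos : ∀ r ∈ Icc (0:ℝ) R, 0 ≤ φ r) (hφ0 : φ 0 = 1)
    (hφ'0 : derivWithin φ (Icc 0 R) 0 = 0) :
    ∃ A > 0, ∀ r, 0 ≤ r → |(Icc 0 R).indicator (fun r => φ r ^ p) r - 1| ≤ A * r ^ 2 := by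
  obtain ⟨K, hK⟩ := exists_abs_sub_le_mul_sq_of_derivWithin_eq_zero hR hφ hφ'0
  obtain ⟨M, hM⟩ := isCompact_Icc.exists_bound_of_continuousOn hφ.continuousOn
  set B := max M 1
  have hφB : ∀ r ∈ Icc (0:ℝ) R, φ r ∈ Icc (0:ℝ) B := fun r hr =>
    ⟨hφpos r hr, (le_abs_self _).trans ((hM r hr).trans (le_max_left _ _))⟩
  have h0 : (0:ℝ) ∈ Icc 0 R := left_mem_Icc.2 hR.le
  refine ⟨max (p * B ^ (p - 1) * K) (R ^ 2)⁻¹, by positivity, fun r hr => ?_⟩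
  by_cases hrR : r ≤ R
  · rw [indicator_of_mem (mem_Icc.2 ⟨hr, hrR⟩)]
    calc |φ r ^ p - 1| = |φ r ^ p - φ 0 ^ p| := by rw [hφ0, one_rpow]
      _ ≤ p * B ^ (p - 1) * |φ r - φ 0| := abs_rpow_sub_rpow_le hp (hφB r ⟨hr, hrR⟩) (hφB 0 h0)
      _ ≤ p * B ^ (p - 1) * (K * r ^ 2) := by
          have hTaylor := hK r ⟨hr, hrR⟩
          rw [sub_zero] at hTaylor
          gcongr
      _ ≤ max (p * B ^ (p - 1) * K) (R ^ 2)⁻¹ * r ^ 2 := by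
          rw [← mul_assoc]
          gcongr
          exact le_max_left _ _
  · rw [indicator_of_notMem (fun h => hrR h.2), zero_sub, abs_neg, abs_one]
    calc (1:ℝ) = (R ^ 2)⁻¹ * R ^ 2 := (inv_mul_cancel₀ (by positivity)).symm
      _ ≤ (R ^ 2)⁻¹ * r ^ 2 := by gcongr; linarith
      _ ≤ max (p * B ^ (p - 1) * K) (R ^ 2)⁻¹ * r ^ 2 := by gcongr; exact le_max_right _ _

theorem continuous_rpow_sub_one_mul_add_sq_rpow_neg {n ε : ℝ} (hn : 1 ≤ n) (hε : 0 < ε) :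
    Continuous fun r : ℝ => r ^ (n - 1) * (ε + r ^ 2) ^ (-n) :=
  (continuous_rpow_const (by linarith)).mul
    ((by fun_prop : Continuous fun r : ℝ => ε + r ^ 2).rpow_const fun _ => Or.inl (by positivity))

theorem intervalIntegral_mul_eq_setIntegral_Ioi_indicator_Icc_mul {f g : ℝ → ℝ} {R : ℝ}
    (hR : 0 ≤ R) :
    ∫ r in (0:ℝ)..R, f r * g r = ∫ r in Ioi 0, (Icc 0 R).indicator f r * g r := by
  simp only [← indicator_mul_left]
  rw [intervalIntegral.integral_of_le hR, setIntegral_indicator measurableSet_Icc]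
  congr 2
  ext r
  simp only [mem_Ioc, mem_inter_iff, mem_Ioi, mem_Icc]
  exact ⟨fun h => ⟨h.1, h.1.le, h.2⟩, fun h => ⟨h.1, h.2.2⟩⟩

theorem critical_term_asymptotics_general (n R : ℝ) (hn2 : 2 < n)
    (hR : 0 < R)
    (φ : ℝ → ℝ) (hφ : ContDiffOn ℝ 2 φ (Icc 0 R))
    (hφpos : ∀ r ∈ Icc (0:ℝ) R, 0 ≤ φ r)
    (hφ0 : φ 0 = 1) (hφ'0 : derivWithin φ (Icc 0 R) 0 = 0) :
    ∃ C > (0:ℝ), ∃ ε0 > (0:ℝ), ∀ ε ∈ Ioo (0:ℝ) ε0,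
      |(∫ r in (0:ℝ)..R, φ r ^ (2 * n / (n - 2)) * (ε + r ^ 2) ^ (-n) * r ^ (n - 1))
        - (Real.Gamma (n / 2) ^ 2 / (2 * Real.Gamma n)) * ε ^ (-n / 2)|
      ≤ C * ε ^ ((2 - n) / 2) := by
  set p := 2 * n / (n - 2)
  have hp : 1 ≤ p := by rw [le_div_iff₀ (by linarith)]; linarith
  obtain ⟨A, hA0, hA⟩ := exists_abs_indicator_rpow_sub_one_le hR hp hφ hφpos hφ0 hφ'0
  have hM : 0 < Gamma (n / 2 + 1) * Gamma (n / 2 - 1) / (2 * Gamma n) :=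
    div_pos (mul_pos (Gamma_pos_of_pos (by linarith)) (Gamma_pos_of_pos (by linarith)))
      (mul_pos two_pos (Gamma_pos_of_pos (by linarith)))
  refine ⟨A * (Gamma (n / 2 + 1) * Gamma (n / 2 - 1) / (2 * Gamma n)), mul_pos hA0 hM,
    1, one_pos, fun ε hε => ?_⟩
  have hε0 : 0 < ε := hε.1
  have hφg : IntegrableOn (fun r => φ r ^ p * (r ^ (n - 1) * (ε + r ^ 2) ^ (-n))) (Icc 0 R) :=
    ((hφ.continuousOn.rpow_const fun _ _ => Or.inr (by linarith)).mul
      (continuous_rpow_sub_one_mul_add_sq_rpow_neg (by linarith) hε0).continuousOn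
      ).integrableOn_compact isCompact_Icc
  have hreorder : ∫ r in (0:ℝ)..R, φ r ^ p * (ε + r ^ 2) ^ (-n) * r ^ (n - 1)
      = ∫ r in (0:ℝ)..R, φ r ^ p * (r ^ (n - 1) * (ε + r ^ 2) ^ (-n)) :=
    intervalIntegral.integral_congr fun r _ => by ring
  rw [hreorder, intervalIntegral_mul_eq_setIntegral_Ioi_indicator_Icc_mul hR.le,
    ← integral_Ioi_rpow_sub_one_mul_add_sq_rpow_neg (by linarith) hε0, mul_assoc,
    ← integral_Ioi_sq_mul_rpow_sub_one_mul_add_sq_rpow_neg hn2 hε0]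
  exact abs_integral_mul_sub_integral_le
    (integrableOn_Ioi_rpow_sub_one_mul_add_sq_rpow_neg (by linarith) hε0)
    (((integrable_indicator_iff measurableSet_Icc).2 hφg).restrict.congr
      (ae_of_all _ fun r => indicator_mul_left _ _ _))
    (integrableOn_Ioi_sq_mul_rpow_sub_one_mul_add_sq_rpow_neg hn2 hε0)
    (ae_restrict_of_forall_mem measurableSet_Ioi fun r (hr : 0 < r) => by positivity)
    (ae_restrict_of_forall_mem measurableSet_Ioi fun r hr => hA r (le_of_lt hr))

/-- Claim 3.3: asymptotics, as `ε → 0⁺`, of the critical-power term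
`∫_0^R v_ε^{2n/(n-2)} r^{n-1} dr` for the test function
`v_ε(r) = φ(r)(ε+r²)^{-(n-2)/2}`. -/
theorem critical_term_asymptotics (n R : ℝ) (hn2 : 2 < n) (hn4 : n < 4)
    (hR : 0 < R)
    (φ : ℝ → ℝ) (hφ : ContDiffOn ℝ 2 φ (Icc 0 R))
    (hφpos : ∀ r ∈ Icc (0:ℝ) R, 0 ≤ φ r)
    (hφ0 : φ 0 = 1) (hφ'0 : derivWithin φ (Icc 0 R) 0 = 0) (hφR : φ R = 0) :
    ∃ C > (0:ℝ), ∃ ε0 > (0:ℝ), ∀ ε ∈ Ioo (0:ℝ) ε0,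
      |(∫ r in (0:ℝ)..R, φ r ^ (2 * n / (n - 2)) * (ε + r ^ 2) ^ (-n) * r ^ (n - 1))
        - (Real.Gamma (n / 2) ^ 2 / (2 * Real.Gamma n)) * ε ^ (-n / 2)|
      ≤ C * ε ^ ((2 - n) / 2) :=
  critical_term_asymptotics_general n R hn2 hR φ hφ hφpos hφ0 hφ'0
end

section
/- Let n and λ be real numbers, θ1 > 0, α = (2−n)/2, and L = λ − n(n−2)/4. Suppose y1, y2 : (0,θ1) → ℝ are three times differentiable and each satisfies y''(θ) + coth(θ)·y'(θ) + (L − α²/sinh²(θ))·y(θ) = 0 on (0,θ1). Then T(θ) := sinh^{4−n}(θ)·y1(θ)·y2(θ) satisfies, for all θ ∈ (0,θ1): (1/4)·T'''(θ) + (3/4)·(n−3)·coth(θ)·T''(θ) + ( (1/4)·(n−3)·(2n−11)·coth²(θ) + λ + (1/4)·(n−7) )·T'(θ) + (n−3)·( (λ−2)·coth(θ) − (n−4)·coth³(θ) )·T(θ) = 0. -/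
open Real Set

noncomputable section

/-!
The product `P = y₁ y₂` of two solutions of `y'' + a y' + b y = 0` solves the symmetric square
`P''' + 3 a P'' + (2 a² + a' + 4 b) P' + (4 a b + 2 b') P = 0`. Take `a = coth` and
`b = L - α² / sinh²`. Since `(sinh ^ p)' = p coth · sinh ^ p`, `coth' = 1 - coth²` and
`1 / sinh² = coth² - 1`, the stated operator applied to `T = sinh ^ (4 - n) · P` is
`sinh ^ (4 - n) / 4` times the symmetric-square operator applied to `P`: the values
`α = (2 - n) / 2` and `L = λ - n (n - 2) / 4` are exactly what make the coefficients match.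
-/

section DerivChain

variable {𝕜 : Type*} [NontriviallyNormedField 𝕜] {s : Set 𝕜}

def HasDeriv3On (s : Set 𝕜) (f f' f'' f''' : 𝕜 → 𝕜) : Prop :=
  ∀ t ∈ s, HasDerivAt f (f' t) t ∧ HasDerivAt f' (f'' t) t ∧ HasDerivAt f'' (f''' t) t

theorem HasDeriv3On.mono {f f' f'' f''' : 𝕜 → 𝕜} {u : Set 𝕜}
    (h : HasDeriv3On s f f' f'' f''') (hu : u ⊆ s) : HasDeriv3On u f f' f'' f''' :=
  fun t ht => h t (hu ht)

theorem HasDeriv3On.mul {f f' f'' f''' g g' g'' g''' : 𝕜 → 𝕜}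
    (hf : HasDeriv3On s f f' f'' f''') (hg : HasDeriv3On s g g' g'' g''') :
    HasDeriv3On s (f * g) (fun t => f' t * g t + f t * g' t)
      (fun t => f'' t * g t + 2 * (f' t * g' t) + f t * g'' t)
      (fun t => f''' t * g t + 3 * (f'' t * g' t) + 3 * (f' t * g'' t) + f t * g''' t) := by
  intro t ht
  obtain ⟨hf1, hf2, hf3⟩ := hf t ht
  obtain ⟨hg1, hg2, hg3⟩ := hg t ht
  refine ⟨hf1.mul hg1, ?_, ?_⟩
  · exact ((hf2.mul hg1).add (hf1.mul hg2)).congr_deriv (by ring)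
  · exact (((hf3.mul hg1).add ((hf2.mul hg2).const_mul 2)).add (hf1.mul hg3)).congr_deriv
      (by ring)

theorem HasDeriv3On.unique (hs : IsOpen s) {f f' f'' f''' g' g'' g''' : 𝕜 → 𝕜}
    (hf : HasDeriv3On s f f' f'' f''') (hg : HasDeriv3On s f g' g'' g''') :
    ∀ t ∈ s, f' t = g' t ∧ f'' t = g'' t ∧ f''' t = g''' t := by
  have h1 : ∀ t ∈ s, f' t = g' t := fun t ht => (hf t ht).1.unique (hg t ht).1
  have h2 : ∀ t ∈ s, f'' t = g'' t := fun t ht =>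
    (hf t ht).2.1.unique <| (hg t ht).2.1.congr_of_eventuallyEq <|
      Filter.eventually_of_mem (hs.mem_nhds ht) h1
  exact fun t ht => ⟨h1 t ht, h2 t ht, (hf t ht).2.2.unique <|
    (hg t ht).2.2.congr_of_eventuallyEq <| Filter.eventually_of_mem (hs.mem_nhds ht) h2⟩

variable {a a' b b' y y' y'' y''' : 𝕜 → 𝕜}

theorem HasDeriv3On.third_deriv_eq_of_ode (hs : IsOpen s)
    (ha : ∀ t ∈ s, HasDerivAt a (a' t) t) (hb : ∀ t ∈ s, HasDerivAt b (b' t) t)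
    (hy : HasDeriv3On s y y' y'' y''') (hode : ∀ t ∈ s, y'' t + a t * y' t + b t * y t = 0)
    {t : 𝕜} (ht : t ∈ s) :
    y''' t = -(a' t * y' t + a t * y'' t + (b' t * y t + b t * y' t)) := by
  obtain ⟨hy1, hy2, hy3⟩ := hy t ht
  refine hy3.unique <| (((ha t ht).mul hy2).add ((hb t ht).mul hy1)).neg.congr_of_eventuallyEq ?_
  filter_upwards [hs.mem_nhds ht] with u hu
  simp only [Pi.neg_apply, Pi.add_apply, Pi.mul_apply]
  linear_combination hode u hu

theorem HasDeriv3On.mul_symmSquare_eq_zero (hs : IsOpen s)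
    (ha : ∀ t ∈ s, HasDerivAt a (a' t) t) (hb : ∀ t ∈ s, HasDerivAt b (b' t) t)
    {y₁ y₁' y₁'' y₁''' y₂ y₂' y₂'' y₂''' P' P'' P''' : 𝕜 → 𝕜}
    (hy₁ : HasDeriv3On s y₁ y₁' y₁'' y₁''') (hy₂ : HasDeriv3On s y₂ y₂' y₂'' y₂''')
    (hode₁ : ∀ t ∈ s, y₁'' t + a t * y₁' t + b t * y₁ t = 0)
    (hode₂ : ∀ t ∈ s, y₂'' t + a t * y₂' t + b t * y₂ t = 0)
    (hP : HasDeriv3On s (y₁ * y₂) P' P'' P''') {t : 𝕜} (ht : t ∈ s) :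
    P''' t + 3 * a t * P'' t + (2 * a t ^ 2 + a' t + 4 * b t) * P' t
      + (4 * a t * b t + 2 * b' t) * (y₁ t * y₂ t) = 0 := by
  obtain ⟨h1, h2, h3⟩ := hP.unique hs (hy₁.mul hy₂) t ht
  have h₁''' := hy₁.third_deriv_eq_of_ode hs ha hb hode₁ ht
  have h₂''' := hy₂.third_deriv_eq_of_ode hs ha hb hode₂ ht
  have h₁'' : y₁'' t = -(a t * y₁' t + b t * y₁ t) := by linear_combination hode₁ t ht
  have h₂'' : y₂'' t = -(a t * y₂' t + b t * y₂ t) := by linear_combination hode₂ t ht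
  rw [h1, h2, h3, h₁''', h₂''', h₁'', h₂'']
  ring

end DerivChain

namespace Real

theorem hasDerivAt_coth {x : ℝ} (hx : sinh x ≠ 0) : HasDerivAt coth (1 - coth x ^ 2) x :=
  ((hasDerivAt_cosh x).div (hasDerivAt_sinh x) hx).congr_deriv <| by
    rw [coth]
    field_simp

theorem div_sinh_sq {x : ℝ} (hx : sinh x ≠ 0) (β : ℝ) :
    β / sinh x ^ 2 = β * (coth x ^ 2 - 1) := by
  rw [coth, div_pow, cosh_sq]
  field_simp
  ring

theorem hasDerivAt_sinh_rpow {x : ℝ} (hx : 0 < x) (p : ℝ) :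
    HasDerivAt (fun u => sinh u ^ p) (p * coth x * sinh x ^ p) x := by
  have hs := sinh_pos_iff.2 hx
  refine ((hasDerivAt_sinh x).rpow_const (Or.inl hs.ne')).congr_deriv ?_
  rw [coth, rpow_sub_one hs.ne']
  field_simp

theorem hasDerivAt_const_sub_div_sinh_sq {x : ℝ} (hx : sinh x ≠ 0) (L β : ℝ) :
    HasDerivAt (fun u => L - β / sinh u ^ 2) (2 * β * coth x * (coth x ^ 2 - 1)) x := by
  have h := (hasDerivAt_const x L).sub
    ((hasDerivAt_const x β).div ((hasDerivAt_sinh x).pow 2) (pow_ne_zero 2 hx))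
  refine h.congr_deriv ?_
  simp only [Pi.pow_apply]
  rw [coth, div_pow, cosh_sq]
  field_simp
  ring

theorem hasDeriv3On_sinh_rpow (p : ℝ) :
    HasDeriv3On (Ioi 0) (fun u => sinh u ^ p) (fun u => p * coth u * sinh u ^ p)
      (fun u => p * (1 - coth u ^ 2 + p * coth u ^ 2) * sinh u ^ p)
      (fun u => p * coth u * ((3 * p - 2) * (1 - coth u ^ 2) + p ^ 2 * coth u ^ 2) *
        sinh u ^ p) := by
  intro x hx
  have hw := hasDerivAt_sinh_rpow hx p
  have hc := hasDerivAt_coth (sinh_pos_iff.2 hx).ne'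
  refine ⟨hw, ?_, ?_⟩
  · exact ((hc.const_mul p).mul hw).congr_deriv (by ring)
  · exact ((((hasDerivAt_const x 1).sub (hc.pow 2)).add ((hc.pow 2).const_mul p)).const_mul p
      |>.mul hw).congr_deriv <| by
        simp only [Pi.add_apply, Pi.sub_apply, Pi.pow_apply]
        push_cast
        ring

end Real

theorem product_solves_third_order_general (n lam θ1 α L : ℝ)
    (hα : α = (2 - n) / 2) (hL : L = lam - n * (n - 2) / 4)
    (y1 y1' y1'' y1''' y2 y2' y2'' y2''' : ℝ → ℝ)
    (hy1 : ∀ θ ∈ Ioo (0:ℝ) θ1, HasDerivAt y1 (y1' θ) θ)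
    (hy1' : ∀ θ ∈ Ioo (0:ℝ) θ1, HasDerivAt y1' (y1'' θ) θ)
    (hy1'' : ∀ θ ∈ Ioo (0:ℝ) θ1, HasDerivAt y1'' (y1''' θ) θ)
    (hy2 : ∀ θ ∈ Ioo (0:ℝ) θ1, HasDerivAt y2 (y2' θ) θ)
    (hy2' : ∀ θ ∈ Ioo (0:ℝ) θ1, HasDerivAt y2' (y2'' θ) θ)
    (hy2'' : ∀ θ ∈ Ioo (0:ℝ) θ1, HasDerivAt y2'' (y2''' θ) θ)
    (hode1 : ∀ θ ∈ Ioo (0:ℝ) θ1,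
      y1'' θ + Real.coth θ * y1' θ + (L - α ^ 2 / Real.sinh θ ^ 2) * y1 θ = 0)
    (hode2 : ∀ θ ∈ Ioo (0:ℝ) θ1,
      y2'' θ + Real.coth θ * y2' θ + (L - α ^ 2 / Real.sinh θ ^ 2) * y2 θ = 0)
    (T T' T'' T''' : ℝ → ℝ)
    (hT : T = fun θ : ℝ => Real.sinh θ ^ (4 - n) * y1 θ * y2 θ)
    (hT' : ∀ θ ∈ Ioo (0:ℝ) θ1, HasDerivAt T (T' θ) θ)
    (hT'' : ∀ θ ∈ Ioo (0:ℝ) θ1, HasDerivAt T' (T'' θ) θ)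
    (hT''' : ∀ θ ∈ Ioo (0:ℝ) θ1, HasDerivAt T'' (T''' θ) θ) :
    ∀ θ ∈ Ioo (0:ℝ) θ1,
      (1 / 4) * T''' θ + (3 / 4) * (n - 3) * Real.coth θ * T'' θ
        + ((1 / 4) * (n - 3) * (2 * n - 11) * Real.coth θ ^ 2 + lam
            + (1 / 4) * (n - 7)) * T' θ
        + (n - 3) * ((lam - 2) * Real.coth θ - (n - 4) * Real.coth θ ^ 3) * T θ
        = 0 := by
  intro θ hθ
  have hsinh : ∀ t ∈ Ioo (0:ℝ) θ1, sinh t ≠ 0 := fun t ht => (sinh_pos_iff.2 ht.1).ne'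
  have hy₁ : HasDeriv3On (Ioo 0 θ1) y1 y1' y1'' y1''' :=
    fun t ht => ⟨hy1 t ht, hy1' t ht, hy1'' t ht⟩
  have hy₂ : HasDeriv3On (Ioo 0 θ1) y2 y2' y2'' y2''' :=
    fun t ht => ⟨hy2 t ht, hy2' t ht, hy2'' t ht⟩
  have hT_eq : T = (fun u => sinh u ^ (4 - n)) * (y1 * y2) := by
    rw [hT]
    ext u
    exact mul_assoc _ _ _
  have hT₃ : HasDeriv3On (Ioo 0 θ1) T T' T'' T''' :=
    fun t ht => ⟨hT' t ht, hT'' t ht, hT''' t ht⟩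
  rw [hT_eq] at hT₃
  have hP := hy₁.mul hy₂
  have hw := (hasDeriv3On_sinh_rpow (4 - n)).mono (Ioo_subset_Ioi_self : Ioo (0:ℝ) θ1 ⊆ Ioi 0)
  obtain ⟨e1, e2, e3⟩ := hT₃.unique isOpen_Ioo (hw.mul hP) θ hθ
  have hsymm := hy₁.mul_symmSquare_eq_zero isOpen_Ioo (fun t ht => hasDerivAt_coth (hsinh t ht))
    (fun t ht => hasDerivAt_const_sub_div_sinh_sq (hsinh t ht) L (α ^ 2)) hy₂ hode1 hode2 hP hθ
  rw [div_sinh_sq (hsinh θ hθ)] at hsymm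
  rw [e1, e2, e3, hT_eq]
  simp only [Pi.mul_apply]
  subst hα hL
  linear_combination sinh θ ^ (4 - n) / 4 * hsymm

/-- The Lemma of Section 4: if `y1`, `y2` both solve the Legendre-type equation
`y'' + coth θ · y' + (L - α²/sinh²θ) y = 0` with `α = (2-n)/2` and
`L = λ - n(n-2)/4`, then `T(θ) = sinh^{4-n}(θ) y1(θ) y2(θ)` solves the
third-order equation (4.10) annihilating the Pohozaev coefficient `A`. -/
theorem product_solves_third_order (n lam θ1 α L : ℝ) (hθ1 : 0 < θ1)
    (hα : α = (2 - n) / 2) (hL : L = lam - n * (n - 2) / 4)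
    (y1 y1' y1'' y1''' y2 y2' y2'' y2''' : ℝ → ℝ)
    (hy1 : ∀ θ ∈ Ioo (0:ℝ) θ1, HasDerivAt y1 (y1' θ) θ)
    (hy1' : ∀ θ ∈ Ioo (0:ℝ) θ1, HasDerivAt y1' (y1'' θ) θ)
    (hy1'' : ∀ θ ∈ Ioo (0:ℝ) θ1, HasDerivAt y1'' (y1''' θ) θ)
    (hy2 : ∀ θ ∈ Ioo (0:ℝ) θ1, HasDerivAt y2 (y2' θ) θ)
    (hy2' : ∀ θ ∈ Ioo (0:ℝ) θ1, HasDerivAt y2' (y2'' θ) θ)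
    (hy2'' : ∀ θ ∈ Ioo (0:ℝ) θ1, HasDerivAt y2'' (y2''' θ) θ)
    (hode1 : ∀ θ ∈ Ioo (0:ℝ) θ1,
      y1'' θ + Real.coth θ * y1' θ + (L - α ^ 2 / Real.sinh θ ^ 2) * y1 θ = 0)
    (hode2 : ∀ θ ∈ Ioo (0:ℝ) θ1,
      y2'' θ + Real.coth θ * y2' θ + (L - α ^ 2 / Real.sinh θ ^ 2) * y2 θ = 0)
    (T T' T'' T''' : ℝ → ℝ)
    (hT : T = fun θ : ℝ => Real.sinh θ ^ (4 - n) * y1 θ * y2 θ)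
    (hT' : ∀ θ ∈ Ioo (0:ℝ) θ1, HasDerivAt T (T' θ) θ)
    (hT'' : ∀ θ ∈ Ioo (0:ℝ) θ1, HasDerivAt T' (T'' θ) θ)
    (hT''' : ∀ θ ∈ Ioo (0:ℝ) θ1, HasDerivAt T'' (T''' θ) θ) :
    ∀ θ ∈ Ioo (0:ℝ) θ1,
      (1 / 4) * T''' θ + (3 / 4) * (n - 3) * Real.coth θ * T'' θ
        + ((1 / 4) * (n - 3) * (2 * n - 11) * Real.coth θ ^ 2 + lam
            + (1 / 4) * (n - 7)) * T' θ
        + (n - 3) * ((lam - 2) * Real.coth θ - (n - 4) * Real.coth θ ^ 3) * T θ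
        = 0 :=
  product_solves_third_order_general n lam θ1 α L hα hL y1 y1' y1'' y1''' y2 y2' y2'' y2''' hy1 hy1'
    hy1'' hy2 hy2' hy2'' hode1 hode2 T T' T'' T''' hT hT' hT'' hT'''

end
end

section
/- Let θ1 > 0, ν ∈ ℝ, M ∈ ℝ. Suppose p, q : (0,θ1) → ℝ are differentiable, p(θ) > 0 for all θ ∈ (0,θ1), and p'(θ) = q(θ) + ν·coth(θ)·p(θ) and q'(θ) = (M − ν(ν+1))·p(θ) − (ν+1)·coth(θ)·q(θ) on (0,θ1). Then Y(θ) := q(θ)/(sinh(θ)·p(θ)) + ν/(2·sinh²(θ/2)) satisfies, for all θ ∈ (0,θ1): Y'(θ) = −sinh(θ)·Y(θ)² + (2·(ν − cosh(θ))/sinh(θ))·Y(θ) + M/sinh(θ). -/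
/-
The relations for `p` and `q` form a linear first-order system, so the ratio
`u = q / p` satisfies the Riccati equation `u' = (M - ν(ν+1)) - (2ν+1) coth θ · u - u²`.
Since `2 sinh²(θ/2) = cosh θ - 1`, we have `Y = u / sinh θ + ν / (cosh θ - 1)`, and (4.19)
follows from the quotient rule and `cosh² - sinh² = 1`.
-/

open Real Set

noncomputable section

theorem Real.two_mul_sinh_half_sq (x : ℝ) : 2 * sinh (x / 2) ^ 2 = cosh x - 1 := by
  have h := cosh_two_mul (x / 2)
  rw [mul_div_cancel₀ x two_ne_zero, cosh_sq] at h
  linarith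

theorem HasDerivAt.div_of_linear_system {p q : ℝ → ℝ} {a b c x : ℝ}
    (hp : HasDerivAt p (q x + a * p x) x) (hq : HasDerivAt q (b * p x - c * q x) x)
    (hpx : p x ≠ 0) :
    HasDerivAt (fun t => q t / p t) (b - (a + c) * (q x / p x) - (q x / p x) ^ 2) x := by
  refine (hq.div hp hpx).congr_deriv ?_
  field_simp
  ring

/-- The left side is written exactly as the quotient rule produces the derivative of
`u / s + ν / (c - 1)`. -/
theorem riccati_equation_of_cosh_sq_sub_sinh_sq {s c u ν M : ℝ} (hs : s ≠ 0) (hc : c - 1 ≠ 0)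
    (hcs : c ^ 2 - s ^ 2 = 1) :
    ((M - ν * (ν + 1) - (ν * (c / s) + (ν + 1) * (c / s)) * u - u ^ 2) * s - u * c) / s ^ 2
        + (0 * (c - 1) - ν * s) / (c - 1) ^ 2
      = -s * (u / s + ν / (c - 1)) ^ 2 + 2 * (ν - c) / s * (u / s + ν / (c - 1)) + M / s := by
  field_simp
  linear_combination (ν * s - ν ^ 2 * s + 2 * ν * u * (1 - c)) * hcs

theorem riccati_equation_general (θ1 ν M : ℝ)
    (p q : ℝ → ℝ)
    (hppos : ∀ θ ∈ Ioo (0:ℝ) θ1, 0 < p θ)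
    (hp : ∀ θ ∈ Ioo (0:ℝ) θ1,
      HasDerivAt p (q θ + ν * Real.coth θ * p θ) θ)
    (hq : ∀ θ ∈ Ioo (0:ℝ) θ1,
      HasDerivAt q ((M - ν * (ν + 1)) * p θ - (ν + 1) * Real.coth θ * q θ) θ)
    (Y : ℝ → ℝ)
    (hY : Y = fun θ : ℝ =>
      q θ / (Real.sinh θ * p θ) + ν / (2 * Real.sinh (θ / 2) ^ 2)) :
    ∀ θ ∈ Ioo (0:ℝ) θ1,
      HasDerivAt Y
        (-Real.sinh θ * Y θ ^ 2 + (2 * (ν - Real.cosh θ) / Real.sinh θ) * Y θ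
          + M / Real.sinh θ) θ := by
  intro θ hθ
  have hs : sinh θ ≠ 0 := (sinh_pos_iff.2 hθ.1).ne'
  have hc : cosh θ - 1 ≠ 0 := sub_ne_zero.2 (one_lt_cosh.2 hθ.1.ne').ne'
  have hY' : Y = fun t => q t / p t / sinh t + ν / (cosh t - 1) := by
    rw [hY]
    funext t
    rw [two_mul_sinh_half_sq, div_div, mul_comm (sinh t)]
  have hu := (hp θ hθ).div_of_linear_system (hq θ hθ) (hppos θ hθ).ne'
  have hdY := (hu.div (hasDerivAt_sinh θ) hs).add
    ((hasDerivAt_const θ ν).div ((hasDerivAt_cosh θ).sub_const 1) hc)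
  rw [hY']
  exact hdY.congr_deriv
    (riccati_equation_of_cosh_sq_sub_sinh_sq (u := q θ / p θ) (M := M) hs hc (cosh_sq_sub_sinh_sq θ))

/-- The Riccati equation (4.19): if `p`, `q` satisfy the raising/lowering
relations of the associated Legendre functions (with `p(θ) = P_ℓ^ν(cosh θ)`,
`q(θ) = P_ℓ^{ν+1}(cosh θ)`, `M = ℓ(ℓ+1)`), then
`Y(θ) = q(θ)/(sinh θ · p(θ)) + ν/(2 sinh²(θ/2))` satisfies
`Y' = -sinh θ · Y² + 2(ν - cosh θ)/sinh θ · Y + M/sinh θ`. -/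
theorem riccati_equation (θ1 ν M : ℝ) (hθ1 : 0 < θ1)
    (p q : ℝ → ℝ)
    (hppos : ∀ θ ∈ Ioo (0:ℝ) θ1, 0 < p θ)
    (hp : ∀ θ ∈ Ioo (0:ℝ) θ1,
      HasDerivAt p (q θ + ν * Real.coth θ * p θ) θ)
    (hq : ∀ θ ∈ Ioo (0:ℝ) θ1,
      HasDerivAt q ((M - ν * (ν + 1)) * p θ - (ν + 1) * Real.coth θ * q θ) θ)
    (Y : ℝ → ℝ)
    (hY : Y = fun θ : ℝ =>
      q θ / (Real.sinh θ * p θ) + ν / (2 * Real.sinh (θ / 2) ^ 2)) :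
    ∀ θ ∈ Ioo (0:ℝ) θ1,
      HasDerivAt Y
        (-Real.sinh θ * Y θ ^ 2 + (2 * (ν - Real.cosh θ) / Real.sinh θ) * Y θ
          + M / Real.sinh θ) θ :=
  riccati_equation_general θ1 ν M p q hppos hp hq Y hY

end
end

section
/- Let θ1 > 0, ν ∈ ℝ, and M < 0. Suppose Y : (0,θ1] → ℝ is differentiable and satisfies Y'(θ) = −sinh(θ)·Y(θ)² + (2·(ν − cosh(θ))/sinh(θ))·Y(θ) + M/sinh(θ) for all θ ∈ (0,θ1], and that limsup_{θ→0⁺} Y(θ) < 0. Then Y(θ) < 0 for all θ ∈ (0,θ1]. -/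
open Real Set Filter

noncomputable section

/-- The sign-preservation argument at the end of Section 4: a solution of the
Riccati equation `Y' = -sinh θ · Y² + 2(ν - cosh θ)/sinh θ · Y + M/sinh θ`
with `M < 0` which satisfies `limsup_{θ→0⁺} Y(θ) < 0` remains negative on all
of `(0,θ1]`. -/
theorem riccati_stays_negative (θ1 ν M : ℝ) (hθ1 : 0 < θ1) (hM : M < 0)
    (Y : ℝ → ℝ)
    (hY : ∀ θ ∈ Ioc (0:ℝ) θ1,
      HasDerivAt Y
        (-Real.sinh θ * Y θ ^ 2 + (2 * (ν - Real.cosh θ) / Real.sinh θ) * Y θ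
          + M / Real.sinh θ) θ)
    (hlimsup : Filter.limsup Y (nhdsWithin 0 (Ioi 0)) < 0) :
    ∀ θ ∈ Ioc (0:ℝ) θ1, Y θ < 0 := by
  have hcont : ∀ θ ∈ Ioc (0:ℝ) θ1, ContinuousAt Y θ := fun θ h => (hY θ h).continuousAt
  -- get c < 0 with Y ≤ c eventually near 0⁺
  obtain ⟨c, hcS, hc0⟩ : ∃ c ∈ {a | ∀ᶠ θ in nhdsWithin 0 (Ioi 0), Y θ ≤ a}, c < 0 := by
    have hset : Filter.limsup Y (nhdsWithin 0 (Ioi 0))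
        = sInf {a | ∀ᶠ θ in nhdsWithin 0 (Ioi 0), Y θ ≤ a} := Filter.limsup_eq
    have hne : {a | ∀ᶠ θ in nhdsWithin 0 (Ioi 0), Y θ ≤ a}.Nonempty := by
      by_contra h
      rw [Set.not_nonempty_iff_eq_empty] at h
      rw [hset, h, Real.sInf_empty] at hlimsup
      exact lt_irrefl 0 hlimsup
    exact exists_lt_of_csInf_lt hne (hset ▸ hlimsup)
  obtain ⟨δ, hδmem, hδ⟩ :=
    (mem_nhdsGT_iff_exists_Ioo_subset).mp hcS
  have hδ0 : (0:ℝ) < δ := hδmem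
  set a : ℝ := min (δ/2) θ1 with ha_def
  have ha0 : 0 < a := lt_min (by linarith) hθ1
  have haδ : a < δ := lt_of_le_of_lt (min_le_left _ _) (by linarith)
  have haθ1 : a ≤ θ1 := min_le_right _ _
  have hYa : Y a < 0 := lt_of_le_of_lt (hδ ⟨ha0, haδ⟩) hc0
  intro θ hθ
  by_contra hcon
  push_neg at hcon
  have hθδ : δ ≤ θ := by
    by_contra h
    push_neg at h
    exact absurd (lt_of_le_of_lt (hδ ⟨hθ.1, h⟩) hc0) (not_lt.mpr hcon)
  have haθ : a ≤ θ := le_of_lt (lt_of_lt_of_le haδ hθδ)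
  set S : Set ℝ := {s | s ∈ Icc a θ1 ∧ 0 ≤ Y s} with hS_def
  have hSne : S.Nonempty := ⟨θ, ⟨⟨haθ, hθ.2⟩, hcon⟩⟩
  have hbdd : BddBelow S := ⟨a, fun s hs => hs.1.1⟩
  set t : ℝ := sInf S with ht_def
  have hat : a ≤ t := le_csInf hSne (fun s hs => hs.1.1)
  have htθ : t ≤ θ := csInf_le hbdd ⟨⟨haθ, hθ.2⟩, hcon⟩
  have htIoc : t ∈ Ioc (0:ℝ) θ1 := ⟨lt_of_lt_of_le ha0 hat, le_trans htθ hθ.2⟩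
  -- Y t ≥ 0
  have hYt : 0 ≤ Y t := by
    by_contra hneg
    push_neg at hneg
    have hev : ∀ᶠ s in nhds t, Y s < 0 :=
      Filter.Tendsto.eventually_lt_const hneg (hcont t htIoc)
    obtain ⟨ε, hε0, hε⟩ := Metric.eventually_nhds_iff.mp hev
    have hlb : t + ε ≤ t := le_csInf hSne (by
      intro s hs
      by_contra h
      push_neg at h
      have hts : t ≤ s := csInf_le hbdd hs
      have : dist s t < ε := by
        rw [Real.dist_eq, abs_of_nonneg (by linarith)]
        linarith
      exact absurd hs.2 (not_le.mpr (hε this)))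
    linarith
  have hatlt : a < t := by
    rcases lt_or_eq_of_le hat with h | h
    · exact h
    · exact absurd hYt (not_le.mpr (h ▸ hYa))
  -- Y < 0 on [a, t)
  have hYneg : ∀ s ∈ Ico a t, Y s < 0 := by
    intro s hs
    by_contra h
    push_neg at h
    have : t ≤ s := csInf_le hbdd ⟨⟨hs.1, le_trans (le_of_lt hs.2) htIoc.2⟩, h⟩
    exact absurd hs.2 (not_lt.mpr this)
  -- Y t = 0
  have hYt0 : Y t = 0 := by
    refine le_antisymm ?_ hYt
    have htend : Filter.Tendsto Y (nhdsWithin t (Iio t)) (nhds (Y t)) :=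
      (hcont t htIoc).tendsto.mono_left nhdsWithin_le_nhds
    refine le_of_tendsto htend ?_
    filter_upwards [Ioo_mem_nhdsLT_of_mem (⟨hatlt, le_refl t⟩ : t ∈ Ioc a t)] with s hs
    exact le_of_lt (hYneg s ⟨le_of_lt hs.1, hs.2⟩)
  -- derivative at t is M / sinh t < 0
  have hd : HasDerivAt Y (M / Real.sinh t) t := by
    have := hY t htIoc
    rw [hYt0] at this
    simpa using this
  have hdneg : M / Real.sinh t < 0 :=
    div_neg_of_neg_of_pos hM (Real.sinh_pos_iff.mpr htIoc.1)
  rw [hasDerivAt_iff_tendsto_slope] at hd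
  have hslope : ∀ᶠ s in nhdsWithin t {t}ᶜ, slope Y t s < 0 :=
    Filter.Tendsto.eventually_lt_const hdneg hd
  have hslope' : ∀ᶠ s in nhdsWithin t (Iio t), slope Y t s < 0 :=
    hslope.filter_mono (nhdsWithin_mono t (fun x hx => ne_of_lt hx))
  have hIoo : Ioo a t ∈ nhdsWithin t (Iio t) :=
    Ioo_mem_nhdsLT_of_mem (⟨hatlt, le_refl t⟩ : t ∈ Ioc a t)
  obtain ⟨s, hs1, hs2⟩ := (hslope'.and (eventually_of_mem hIoo (fun x hx => hx))).exists
  have hsneg : Y s < 0 := hYneg s ⟨le_of_lt hs2.1, hs2.2⟩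
  have : Y s / (s - t) < 0 := by
    have := hs1
    rw [slope_def_field, hYt0] at this
    simpa using this
  rcases div_neg_iff.mp this with ⟨h1, h2⟩ | ⟨h1, h2⟩
  · linarith
  · linarith [hs2.2]

end
end

section
/- Let n and λ be real numbers with 2 < n < 4, let α = (2−n)/2, p = (n+2)/(n−2), and define G(θ) = −α² + (λ − n(n−2)/4)·sinh²(θ). Let 0 ≤ a < b and suppose v : (a,b) → ℝ is positive, twice differentiable, and satisfies sinh²(θ)·v''(θ) + sinh(θ)·cosh(θ)·v'(θ) + G(θ)·v(θ) + v(θ)^p = 0 on (a,b). Then the energy E(θ) := sinh²(θ)·v'(θ)² + (2/(p+1))·v(θ)^{p+1} + G(θ)·v(θ)² satisfies E'(θ) = 2·(λ − n(n−2)/4)·sinh(θ)·cosh(θ)·v(θ)² for all θ ∈ (a,b). -/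
open Real Set

/-- Multiplying the equation `q v'' + (q'/2) v' + G v + v^p = 0` by `2 v'` makes every term except
`G' v²` an exact derivative. -/
theorem hasDerivAt_energy_of_ode {q G v v' : ℝ → ℝ} {q' G' v'' p x : ℝ}
    (hp : p + 1 ≠ 0) (hvpos : 0 < v x)
    (hq : HasDerivAt q q' x) (hG : HasDerivAt G G' x)
    (hv : HasDerivAt v (v' x) x) (hv' : HasDerivAt v' v'' x)
    (hode : q x * v'' + q' / 2 * v' x + G x * v x + v x ^ p = 0) :
    HasDerivAt (fun y => q y * v' y ^ 2 + 2 / (p + 1) * v y ^ (p + 1) + G y * v y ^ 2)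
      (G' * v x ^ 2) x := by
  have hpow : HasDerivAt (fun y => 2 / (p + 1) * v y ^ (p + 1)) (2 * v x ^ p * v' x) x := by
    refine ((hv.rpow_const (Or.inl hvpos.ne')).const_mul (2 / (p + 1))).congr_deriv ?_
    rw [add_sub_cancel_right]
    field_simp
  refine (((hq.mul (hv'.pow 2)).add hpow).add (hG.mul (hv.pow 2))).congr_deriv ?_
  simp only [Pi.pow_apply]
  linear_combination 2 * v' x * hode

theorem hasDerivAt_sinh_sq (x : ℝ) :
    HasDerivAt (fun y => sinh y ^ 2) (2 * sinh x * cosh x) x := by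
  refine ((hasDerivAt_sinh x).pow 2).congr_deriv ?_
  ring

theorem energy_identity_general (n lam α p a b : ℝ)
    (hn2 : 2 < n)
    (hp : p = (n + 2) / (n - 2))
    (G : ℝ → ℝ)
    (hG : G = fun θ : ℝ => -α ^ 2 + (lam - n * (n - 2) / 4) * Real.sinh θ ^ 2)
    (v v' v'' : ℝ → ℝ)
    (hvpos : ∀ θ ∈ Ioo a b, 0 < v θ)
    (hv : ∀ θ ∈ Ioo a b, HasDerivAt v (v' θ) θ)
    (hv' : ∀ θ ∈ Ioo a b, HasDerivAt v' (v'' θ) θ)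
    (hode : ∀ θ ∈ Ioo a b,
      Real.sinh θ ^ 2 * v'' θ + Real.sinh θ * Real.cosh θ * v' θ
        + G θ * v θ + v θ ^ p = 0)
    (E : ℝ → ℝ)
    (hE : E = fun θ : ℝ => Real.sinh θ ^ 2 * v' θ ^ 2
      + (2 / (p + 1)) * v θ ^ (p + 1) + G θ * v θ ^ 2) :
    ∀ θ ∈ Ioo a b,
      HasDerivAt E
        (2 * (lam - n * (n - 2) / 4) * Real.sinh θ * Real.cosh θ * v θ ^ 2) θ := by
  intro θ hθ
  have hp1 : p + 1 ≠ 0 := by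
    have : 0 < p := hp ▸ div_pos (by linarith) (by linarith)
    positivity
  have hGderiv : HasDerivAt G (2 * (lam - n * (n - 2) / 4) * sinh θ * cosh θ) θ := by
    subst hG
    refine (((hasDerivAt_sinh_sq θ).const_mul (lam - n * (n - 2) / 4)).const_add
      (-α ^ 2)).congr_deriv ?_
    ring
  subst hE
  refine hasDerivAt_energy_of_ode hp1 (hvpos θ hθ) (hasDerivAt_sinh_sq θ) hGderiv (hv θ hθ)
    (hv' θ hθ) ?_
  linear_combination hode θ hθ

/-- The energy identity of Section 5: for a positive solution `v` of the
transformed Brezis–Nirenberg equation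
`sinh²θ · v'' + sinh θ cosh θ · v' + G(θ) v + v^p = 0` with
`G(θ) = -α² + (λ - n(n-2)/4) sinh²θ`, the energy
`E = sinh²θ · v'² + (2/(p+1)) v^{p+1} + G v²` satisfies
`E'(θ) = G'(θ) v(θ)² = 2(λ - n(n-2)/4) sinh θ cosh θ · v(θ)²`. -/
theorem energy_identity (n lam α p a b : ℝ)
    (hn2 : 2 < n) (hn4 : n < 4)
    (hα : α = (2 - n) / 2) (hp : p = (n + 2) / (n - 2))
    (ha : 0 ≤ a) (hab : a < b)
    (G : ℝ → ℝ)
    (hG : G = fun θ : ℝ => -α ^ 2 + (lam - n * (n - 2) / 4) * Real.sinh θ ^ 2)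
    (v v' v'' : ℝ → ℝ)
    (hvpos : ∀ θ ∈ Ioo a b, 0 < v θ)
    (hv : ∀ θ ∈ Ioo a b, HasDerivAt v (v' θ) θ)
    (hv' : ∀ θ ∈ Ioo a b, HasDerivAt v' (v'' θ) θ)
    (hode : ∀ θ ∈ Ioo a b,
      Real.sinh θ ^ 2 * v'' θ + Real.sinh θ * Real.cosh θ * v' θ
        + G θ * v θ + v θ ^ p = 0)
    (E : ℝ → ℝ)
    (hE : E = fun θ : ℝ => Real.sinh θ ^ 2 * v' θ ^ 2
      + (2 / (p + 1)) * v θ ^ (p + 1) + G θ * v θ ^ 2) :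
    ∀ θ ∈ Ioo a b,
      HasDerivAt E
        (2 * (lam - n * (n - 2) / 4) * Real.sinh θ * Real.cosh θ * v θ ^ 2) θ :=
  energy_identity_general n lam α p a b hn2 hp G hG v v' v'' hvpos hv hv' hode E hE
end
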